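/- arXiv:1905.12318 — 5 statements merged into one kernel-verified Lean document; each statement's English description precedes it below -/
import Mathlib

section
/- If $G$ is a graph that has exactly two odd cycles, and these two cycles share no edge, then the two cycles intersect either in a single vertex or not at all. -/
/-!
Suppose the two edge-disjoint odd cycles met in two vertices `u ≠ v`. Cutting both at `u` and `v`
splits each into two arcs; since the arcs of the second cycle have odd total length, one arc `P` of
the first cycle followed by one of them is an odd closed walk. An odd closed walk contains an odd
cycle among its edges, and this cycle misses the other arc of each given cycle, so it is a third
odd cycle.
-/

open SimpleGraph

/-- The chromatic edge-stability number `esχ(G)`: the minimum number of edges whose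
removal from `G` results in a spanning subgraph `G'` with `χ(G') = χ(G) - 1`. -/
noncomputable def esChi {V : Type} (G : SimpleGraph V) : ℕ :=
  sInf {n : ℕ | ∃ F : Finset (Sym2 V), ↑F ⊆ G.edgeSet ∧ F.card = n ∧
    (G.deleteEdges ↑F).chromaticNumber + 1 = G.chromaticNumber}

/-- A graph is edge-stability critical if deleting any edge decreases `esχ`. -/
def EdgeStabilityCritical {V : Type} (G : SimpleGraph V) : Prop :=
  ∀ e ∈ G.edgeSet, esChi (G.deleteEdges {e}) < esChi G

/-- `G` is `(k, ℓ)`-critical: edge-stability critical with `χ(G) = k` and `esχ(G) = ℓ`. -/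
def IsKLCritical {V : Type} (G : SimpleGraph V) (k ℓ : ℕ) : Prop :=
  EdgeStabilityCritical G ∧ G.chromaticNumber = (k : ℕ∞) ∧ esChi G = ℓ

/-- `H` is an odd cycle subgraph of `G`: the subgraph of some odd-length cycle of `G`. -/
def IsOddCycleSubgraph {V : Type} (G : SimpleGraph V) (H : G.Subgraph) : Prop :=
  ∃ (u : V) (w : G.Walk u u), w.IsCycle ∧ Odd w.length ∧ w.toSubgraph = H

/-- `H` is a path subgraph of `G`: the subgraph of some path of `G`. -/
def IsPathSubgraph {V : Type} (G : SimpleGraph V) (H : G.Subgraph) : Prop :=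
  ∃ (u v : V) (w : G.Walk u v), w.IsPath ∧ w.toSubgraph = H

namespace SimpleGraph.Walk

variable {V : Type} {G : SimpleGraph V}

theorem exists_isCycle_odd_length_edges_subset {u : V} (w : G.Walk u u) (hw : Odd w.length) :
    ∃ (x : V) (c : G.Walk x x), c.IsCycle ∧ Odd c.length ∧ c.edges ⊆ w.edges := by
  induction hn : w.length using Nat.strong_induction_on generalizing u with
  | _ n ih =>
  subst hn
  by_cases htail : w.tail.IsPath
  · have hlen : w.length ≠ 1 := fun h ↦ (adj_of_length_eq_one h).ne rfl
    refine ⟨u, w, isCycle_iff_isPath_tail_and_le_length.mpr ⟨htail, ?_⟩, hw, List.Subset.refl _⟩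
    obtain ⟨k, hk⟩ := hw
    omega
  -- Otherwise `w` splits into a nontrivial closed subwalk `c` and the closed walk `p ++ q` around
  -- it, both shorter than `w`; one of them has odd length.
  obtain ⟨x, c, hc, hnil⟩ : ∃ (x : V) (c : G.Walk x x), c.IsSubwalk w.tail ∧ ¬ c.Nil := by
    simpa [isPath_iff_isSubwalk_imp_nil] using htail
  have hcw : c.IsSubwalk w := hc.trans (isSubwalk_drop w 1)
  obtain ⟨p, q, rfl⟩ := id hcw
  have hc_pos : 0 < c.length := not_nil_iff_lt_length.mp hnil
  have hc_lt : c.length < ((p.append c).append q).length := by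
    have := length_le_of_isSubwalk hc
    rw [length_tail] at this
    omega
  have hlen : ((p.append c).append q).length = c.length + (p.append q).length := by
    simp only [length_append]
    omega
  rcases Nat.even_or_odd c.length with hce | hco
  · have hpq : Odd (p.append q).length := by
      rw [hlen] at hw
      exact (Nat.odd_add'.mp hw).mpr hce
    obtain ⟨y, d, hd, hdo, hde⟩ := ih _ (by omega) _ hpq rfl
    refine ⟨y, d, hd, hdo, List.Subset.trans hde fun e he ↦ ?_⟩
    simp only [edges_append, List.mem_append] at he ⊢
    tauto
  · obtain ⟨y, d, hd, hdo, hde⟩ := ih _ hc_lt c hco rfl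
    exact ⟨y, d, hd, hdo, List.Subset.trans hde hcw.edges_subset⟩

theorem IsTrail.not_edges_subset_of_length_lt {u v x y : V} {p : G.Walk u v} {q : G.Walk x y}
    (hp : p.IsTrail) (hlen : q.length < p.length) : ¬ p.edges ⊆ q.edges := fun hsub ↦ by
  have := (hp.edges_nodup.subperm hsub).length_le
  simp only [length_edges] at this
  omega

theorem exists_odd_length_not_edges_subset {u v : V} {c₁ c₂ : G.Walk u u} (hc₁ : c₁.IsTrail)
    (hc₂ : c₂.IsTrail) (ho₂ : Odd c₂.length) (hdisj : c₁.edges.Disjoint c₂.edges)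
    (hv₁ : v ∈ c₁.support) (hv₂ : v ∈ c₂.support) (hvu : v ≠ u) :
    ∃ w : G.Walk u u, Odd w.length ∧ ¬ c₁.edges ⊆ w.edges ∧ ¬ c₂.edges ⊆ w.edges := by
  classical
  set P := c₁.takeUntil v hv₁
  suffices h : ∀ R : G.Walk v u, Odd (P.length + R.length) → R.edges ⊆ c₂.edges →
      R.length < c₂.length →
      ∃ w : G.Walk u u, Odd w.length ∧ ¬ c₁.edges ⊆ w.edges ∧ ¬ c₂.edges ⊆ w.edges by
    set Q := c₂.takeUntil v hv₂
    set Q' := c₂.dropUntil v hv₂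
    have hQ : Q.length + Q'.length = c₂.length := by
      rw [← length_append, take_spec]
    -- The arcs `Q`, `Q'` of `c₂` have odd total length, so `P` makes an odd walk with one of them.
    rcases Nat.even_or_odd (P.length + Q'.length) with hPQ' | hPQ'
    · refine h Q.reverse ?_ (by simpa using c₂.edges_takeUntil_subset_edges hv₂) ?_
      · rw [length_reverse]
        rw [← hQ, Nat.odd_iff] at ho₂
        rw [Nat.even_iff] at hPQ'
        rw [Nat.odd_iff]
        omega
      · rw [length_reverse]
        exact length_takeUntil_lt_length hv₂ hvu
    · exact h Q' hPQ' (c₂.edges_dropUntil_subset_edges hv₂) (length_dropUntil_lt_length hv₂ hvu)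
  intro R hodd hRc hR
  refine ⟨P.append R, by rwa [length_append], fun h ↦ ?_, fun h ↦ ?_⟩
  · refine hc₁.not_edges_subset_of_length_lt (length_takeUntil_lt_length hv₁ hvu) fun e he ↦ ?_
    have := h he
    rw [edges_append, List.mem_append] at this
    exact this.resolve_right fun heR ↦ hdisj he (hRc heR)
  · refine hc₂.not_edges_subset_of_length_lt hR fun e he ↦ ?_
    have := h he
    rw [edges_append, List.mem_append] at this
    exact this.resolve_left fun heP ↦ hdisj (c₁.edges_takeUntil_subset_edges hv₁ heP) he

end SimpleGraph.Walk

theorem IsOddCycleSubgraph.exists_walk_of_mem_verts {V : Type} {G : SimpleGraph V} {H : G.Subgraph}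
    (hH : IsOddCycleSubgraph G H) {u : V} (hu : u ∈ H.verts) :
    ∃ c : G.Walk u u, c.IsCycle ∧ Odd c.length ∧ c.toSubgraph = H := by
  classical
  obtain ⟨a, w, hw, hwo, rfl⟩ := hH
  have hu' : u ∈ w.support := w.mem_verts_toSubgraph.mp hu
  exact ⟨w.rotate u hu', hw.rotate hu', by rwa [Walk.length_rotate], w.toSubgraph_rotate hu'⟩

theorem two_odd_cycles_meet_in_at_most_one_vertex_general {V : Type}
    (G : SimpleGraph V) (H₁ H₂ : G.Subgraph)
    (h₁ : IsOddCycleSubgraph G H₁) (h₂ : IsOddCycleSubgraph G H₂)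
    (hall : ∀ H : G.Subgraph, IsOddCycleSubgraph G H → H = H₁ ∨ H = H₂)
    (hedge : H₁.edgeSet ∩ H₂.edgeSet = ∅) :
    H₁.verts ∩ H₂.verts = ∅ ∨ ∃ v : V, H₁.verts ∩ H₂.verts = {v} := by
  refine Set.Subsingleton.eq_empty_or_singleton fun u hu v hv ↦ ?_
  by_contra huv
  obtain ⟨c₁, hc₁, -, rfl⟩ := h₁.exists_walk_of_mem_verts hu.1
  obtain ⟨c₂, hc₂, ho₂, rfl⟩ := h₂.exists_walk_of_mem_verts hu.2
  have hdisj : c₁.edges.Disjoint c₂.edges := fun e he₁ he₂ ↦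
    Set.eq_empty_iff_forall_notMem.mp hedge e
      ⟨c₁.mem_edges_toSubgraph.mpr he₁, c₂.mem_edges_toSubgraph.mpr he₂⟩
  obtain ⟨w, hw, hw₁, hw₂⟩ := Walk.exists_odd_length_not_edges_subset hc₁.isTrail hc₂.isTrail ho₂
    hdisj (c₁.mem_verts_toSubgraph.mp hv.1) (c₂.mem_verts_toSubgraph.mp hv.2) (Ne.symm huv)
  obtain ⟨x, c, hc, hco, hcw⟩ := w.exists_isCycle_odd_length_edges_subset hw
  have edges_subset_of_eq {y : V} {d : G.Walk y y} (h : c.toSubgraph = d.toSubgraph) :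
      d.edges ⊆ w.edges := fun e he ↦
    hcw (c.mem_edges_toSubgraph.mp (h ▸ d.mem_edges_toSubgraph.mpr he))
  rcases hall c.toSubgraph ⟨x, c, hc, hco, rfl⟩ with h | h
  · exact hw₁ (edges_subset_of_eq h)
  · exact hw₂ (edges_subset_of_eq h)

/-- Lemma 2.1: if `G` has exactly two odd cycles `H₁ ≠ H₂`, and they share no edge, then
they intersect either in a single vertex or not at all. -/
theorem two_odd_cycles_meet_in_at_most_one_vertex {V : Type} [Fintype V]
    (G : SimpleGraph V) (H₁ H₂ : G.Subgraph)
    (h₁ : IsOddCycleSubgraph G H₁) (h₂ : IsOddCycleSubgraph G H₂) (hne : H₁ ≠ H₂)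
    (hall : ∀ H : G.Subgraph, IsOddCycleSubgraph G H → H = H₁ ∨ H = H₂)
    (hedge : H₁.edgeSet ∩ H₂.edgeSet = ∅) :
    H₁.verts ∩ H₂.verts = ∅ ∨ ∃ v : V, H₁.verts ∩ H₂.verts = {v} :=
  two_odd_cycles_meet_in_at_most_one_vertex_general G H₁ H₂ h₁ h₂ hall hedge
end

section
/- If $G$ is a graph that has exactly three odd cycles, then the intersection (as subgraphs) of every two of its odd cycles is either empty or a path. -/
open SimpleGraph

/-!
If `H₁ ⊓ H₂` is connected, it is a connected proper subgraph of the cycle `H₁` (a cycle inside a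
cycle is the whole cycle, since all its degrees are already 2), and a longest path inside it
exhausts it: an extra edge at an inner vertex of the path would raise a degree of `H₁` to 3, and
one at an end would either extend the path or close a cycle strictly inside `H₁`.

Otherwise, if it is nonempty, pick `a, b` in it that are not joined inside `H₁ ⊓ H₂`. They cut
`H₁` into arcs `P₁, P₂` and `H₂` into arcs `Q₁, Q₂`, labelled so that the closed walks `P₁ Q₁⁻¹`
and `P₂ Q₂⁻¹` are odd. These contain odd cycles `T₁, T₂`, and any coincidence among
`H₁, H₂, T₁, T₂` would put a whole arc into `H₁ ⊓ H₂`: four odd cycles.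
-/

namespace SimpleGraph

variable {V : Type*} {G : SimpleGraph V}

namespace Walk

lemma IsPath.cons_isCycle_of_length_ne_one {u v : V} {p : G.Walk v u} (hp : p.IsPath)
    (h : G.Adj u v) (hl : p.length ≠ 1) : (cons h p).IsCycle :=
  (cons_isCycle_iff p h).mpr
    ⟨hp, fun he => hl (hp.length_eq_one_of_mem_edges (Sym2.eq_swap ▸ he))⟩

/-- If the new start vertex `u` lies on the path `q` obtained for the tail, the segment of `q`
up to `u` closes a cycle; when that cycle is even, the rest of `q` is a path of the right parity. -/
theorem exists_odd_isCycle_or_isPath [DecidableEq V] {u v : V} (p : G.Walk u v) :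
    (∃ (x : V) (c : G.Walk x x), c.IsCycle ∧ Odd c.length ∧ c.edges ⊆ p.edges) ∨
      ∃ q : G.Walk u v, q.IsPath ∧ q.edges ⊆ p.edges ∧ (Even q.length ↔ Even p.length) := by
  induction p with
  | nil => exact .inr ⟨nil, .nil, by simp, .rfl⟩
  | @cons u y v h p ih =>
    rcases ih with ⟨x, c, hc, hodd, hsub⟩ | ⟨q, hq, hsub, hpar⟩
    · exact .inl ⟨x, c, hc, hodd, List.Subset.trans hsub (List.subset_cons_self _ _)⟩
    by_cases hu : u ∈ q.support
    · have hlen := congrArg length (q.take_spec hu)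
      rw [length_append] at hlen
      by_cases hA : Even (q.takeUntil u hu).length
      · refine .inl ⟨u, cons h (q.takeUntil u hu), ?_, ?_, ?_⟩
        · exact (hq.takeUntil hu).cons_isCycle_of_length_ne_one h (by rintro h1; simp [h1] at hA)
        · simpa [Nat.odd_add_one] using hA
        · exact List.cons_subset_cons _ (List.Subset.trans (q.edges_takeUntil_subset_edges hu) hsub)
      · refine .inr ⟨q.dropUntil u hu, hq.dropUntil hu,
          List.Subset.trans (q.edges_dropUntil_subset_edges hu)
            (List.Subset.trans hsub (List.subset_cons_self _ _)), ?_⟩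
        rw [length_cons, Nat.even_add_one, ← hpar, ← hlen, Nat.even_add]
        tauto
    · exact .inr ⟨cons h q, hq.cons hu, List.cons_subset_cons _ hsub,
        by simp [Nat.even_add_one, hpar]⟩

theorem exists_odd_isCycle_of_odd_length {u : V} (p : G.Walk u u) (hp : Odd p.length) :
    ∃ (x : V) (c : G.Walk x x), c.IsCycle ∧ Odd c.length ∧ c.edges ⊆ p.edges := by
  classical
  refine (exists_odd_isCycle_or_isPath p).resolve_right ?_
  rintro ⟨q, hq, -, hpar⟩
  rw [(isPath_iff_nil.mp hq).eq_nil] at hpar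
  exact Nat.not_even_iff_odd.mpr hp (hpar.mp .zero)

lemma toSubgraph_takeUntil_le [DecidableEq V] {u v w : V} (p : G.Walk u v) (h : w ∈ p.support) :
    (p.takeUntil w h).toSubgraph ≤ p.toSubgraph := by
  conv_rhs => rw [← p.take_spec h, toSubgraph_append]
  exact le_sup_left

theorem IsCycle.exists_arcs {u a b : V} {w : G.Walk u u} (hw : w.IsCycle)
    (ha : a ∈ w.support) (hb : b ∈ w.support) :
    ∃ (P : G.Walk a b) (Q : G.Walk b a), P.length + Q.length = w.length ∧
      P.edgeSet ∪ Q.edgeSet = w.edgeSet ∧ Disjoint P.edgeSet Q.edgeSet := by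
  classical
  have hb' : b ∈ (w.rotate a ha).support := (mem_support_rotate_iff _ _ _).mpr hb
  have hspec := (w.rotate a ha).take_spec hb'
  refine ⟨(w.rotate a ha).takeUntil b hb', (w.rotate a ha).dropUntil b hb', ?_, ?_, ?_⟩
  · rw [← length_append, hspec, length_rotate]
  · rw [← edgeSet_append, hspec]
    ext e
    exact (rotate_edges w a ha).mem_iff
  · have hnd := (hw.rotate ha).edges_nodup
    rw [← hspec, edges_append] at hnd
    exact Set.disjoint_left.mpr fun e he₁ he₂ => List.disjoint_of_nodup_append hnd he₁ he₂

end Walk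

open Walk

theorem Subgraph.eq_of_le_of_neighborSet_subset {S H : G.Subgraph} (hle : S ≤ H)
    (hH : H.Connected) (hS : S.verts.Nonempty)
    (hnbr : ∀ v ∈ S.verts, H.neighborSet v ⊆ S.neighborSet v) : S = H := by
  have hverts : H.verts ⊆ S.verts := by
    obtain ⟨s, hs⟩ := hS
    intro v hv
    obtain ⟨p, hp⟩ := (H.connected_iff_forall_exists_walk_subgraph.mp hH).2 (hle.1 hs) hv
    clear hv
    induction p with
    | nil => exact hs
    | @cons x y v h p ih =>
      rw [Walk.toSubgraph, sup_le_iff] at hp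
      exact ih (S.edge_vert (hnbr x hs (hp.1.2 (subgraphOfAdj_adj_self h))).symm) hp.2
  exact le_antisymm hle ⟨hverts, fun v _ hvw => hnbr v (hverts (H.edge_vert hvw)) hvw⟩

theorem Walk.IsCycle.neighborSet_toSubgraph_subset_of_ncard_eq_two {u v : V} {c : G.Walk u u}
    (hc : c.IsCycle) {S : G.Subgraph} (hS : S ≤ c.toSubgraph) (hv : (S.neighborSet v).ncard = 2) :
    c.toSubgraph.neighborSet v ⊆ S.neighborSet v := by
  obtain ⟨x, hx⟩ := Set.nonempty_of_ncard_ne_zero (hv.trans_ne two_ne_zero)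
  have hvc : v ∈ c.support := c.mem_support_of_adj_toSubgraph (hS.2 hx)
  refine (Set.eq_of_subset_of_ncard_le (Subgraph.neighborSet_subset_of_subgraph hS v) ?_
    c.finite_neighborSet_toSubgraph).ge
  rw [hc.ncard_neighborSet_toSubgraph_eq_two hvc, hv]

theorem Walk.IsCycle.toSubgraph_eq_of_le {u v : V} {c : G.Walk u u} {w : G.Walk v v}
    (hc : c.IsCycle) (hw : w.IsCycle) (hle : c.toSubgraph ≤ w.toSubgraph) :
    c.toSubgraph = w.toSubgraph :=
  Subgraph.eq_of_le_of_neighborSet_subset hle w.toSubgraph_connected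
    ⟨u, c.start_mem_verts_toSubgraph⟩ fun _ hx =>
      hw.neighborSet_toSubgraph_subset_of_ncard_eq_two hle
        (hc.ncard_neighborSet_toSubgraph_eq_two (c.mem_verts_toSubgraph.mp hx))

def Subgraph.IsLongestPath (K : G.Subgraph) {s t : V} (p : G.Walk s t) : Prop :=
  p.IsPath ∧ p.toSubgraph ≤ K ∧
    ∀ ⦃s' t' : V⦄ (q : G.Walk s' t'), q.IsPath → q.toSubgraph ≤ K → q.length ≤ p.length

theorem Subgraph.exists_isLongestPath {K : G.Subgraph} (hfin : K.verts.Finite)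
    (hne : K.verts.Nonempty) : ∃ (s t : V) (p : G.Walk s t), K.IsLongestPath p := by
  classical
  let HasPathOfLength (n : ℕ) : Prop :=
    ∃ (s t : V) (p : G.Walk s t), p.IsPath ∧ p.toSubgraph ≤ K ∧ p.length = n
  have hbound : ∀ n, HasPathOfLength n → n ≤ hfin.toFinset.card := by
    rintro n ⟨s, t, p, hp, hpK, rfl⟩
    calc p.length ≤ p.support.toFinset.card := by
          rw [List.toFinset_card_of_nodup hp.support_nodup, length_support]; omega
      _ ≤ hfin.toFinset.card := Finset.card_le_card fun v hv => by
          simpa using hpK.1 (p.mem_verts_toSubgraph.mpr (List.mem_toFinset.mp hv))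
  obtain ⟨v, hv⟩ := hne
  have h0 : HasPathOfLength 0 := ⟨v, v, nil, .nil, by simpa using hv, rfl⟩
  obtain ⟨s, t, p, hp, hpK, hlen⟩ := Nat.findGreatest_spec (Nat.zero_le _) h0
  exact ⟨s, t, p, hp, hpK, fun s' t' q hq hqK =>
    hlen ▸ Nat.le_findGreatest (hbound _ ⟨_, _, q, hq, hqK, rfl⟩) ⟨_, _, q, hq, hqK, rfl⟩⟩

namespace Subgraph.IsLongestPath

variable {K : G.Subgraph} {u s t : V} {w : G.Walk u u} {p : G.Walk s t}

theorem reverse (hp : K.IsLongestPath p) : K.IsLongestPath p.reverse :=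
  ⟨hp.1.reverse, by rw [toSubgraph_reverse]; exact hp.2.1, fun _ _ q hq hqK =>
    (hp.2.2 q hq hqK).trans_eq p.length_reverse.symm⟩

theorem toSubgraph_adj_start (hp : K.IsLongestPath p) (hw : w.IsCycle) (hK : K < w.toSubgraph)
    {z : V} (hz : K.Adj s z) : p.toSubgraph.Adj s z := by
  classical
  obtain ⟨hpath, hpK, hmax⟩ := hp
  by_contra hnadj
  have hzs : K.Adj z s := hz.symm
  by_cases hzp : z ∈ p.support
  · have hcyc : (cons (K.adj_sub hzs) (p.takeUntil z hzp)).IsCycle :=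
      (cons_isCycle_iff _ _).mpr ⟨hpath.takeUntil hzp, fun he => hnadj <|
        adj_toSubgraph_iff_mem_edges.mpr (p.edges_takeUntil_subset_edges hzp (Sym2.eq_swap ▸ he))⟩
    have hle : (cons (K.adj_sub hzs) (p.takeUntil z hzp)).toSubgraph ≤ K :=
      sup_le (subgraphOfAdj_le_of_adj K hzs) ((p.toSubgraph_takeUntil_le hzp).trans hpK)
    exact hK.not_ge (hcyc.toSubgraph_eq_of_le hw (hle.trans hK.le) ▸ hle)
  · have := hmax (cons (K.adj_sub hzs) p) (hpath.cons hzp)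
      (sup_le (subgraphOfAdj_le_of_adj K hzs) hpK)
    simp at this

theorem neighborSet_subset (hp : K.IsLongestPath p) (hw : w.IsCycle) (hK : K < w.toSubgraph)
    {v : V} (hv : v ∈ p.support) : K.neighborSet v ⊆ p.toSubgraph.neighborSet v := by
  obtain ⟨i, rfl, hi⟩ := mem_support_iff_exists_getVert.mp hv
  rcases Nat.eq_zero_or_pos i with rfl | hi0
  · exact fun z hz => by simpa using hp.toSubgraph_adj_start hw hK (by simpa using hz)
  rcases hi.eq_or_lt with rfl | hil
  · exact fun z hz => by simpa using hp.reverse.toSubgraph_adj_start hw hK (by simpa using hz)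
  exact (Subgraph.neighborSet_subset_of_subgraph hK.le _).trans
    (hw.neighborSet_toSubgraph_subset_of_ncard_eq_two (hp.2.1.trans hK.le)
      (hp.1.ncard_neighborSet_toSubgraph_internal_eq_two hi0.ne' hil))

end Subgraph.IsLongestPath

theorem Walk.IsCycle.exists_isPath_toSubgraph_eq_of_lt {K : G.Subgraph} {u : V}
    {w : G.Walk u u} (hw : w.IsCycle) (hK : K < w.toSubgraph) (hconn : K.Connected) :
    ∃ (s t : V) (p : G.Walk s t), p.IsPath ∧ p.toSubgraph = K := by
  have hfin : K.verts.Finite := w.support.finite_toSet.subset (by simpa using hK.le.1)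
  obtain ⟨s, t, p, hp⟩ := Subgraph.exists_isLongestPath hfin hconn.nonempty
  exact ⟨s, t, p, hp.1, Subgraph.eq_of_le_of_neighborSet_subset hp.2.1 hconn
    ⟨s, p.start_mem_verts_toSubgraph⟩ fun _ hv =>
      hp.neighborSet_subset hw hK (p.mem_verts_toSubgraph.mp hv)⟩

end SimpleGraph

open Walk

variable {V : Type} {G : SimpleGraph V}

theorem IsOddCycleSubgraph.eq_of_edgeSet_subset {T H : G.Subgraph} (hT : IsOddCycleSubgraph G T)
    (hH : IsOddCycleSubgraph G H) (hTH : T.edgeSet ⊆ H.edgeSet) : T = H := by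
  obtain ⟨u, c, hc, -, rfl⟩ := hT
  obtain ⟨v, w, hw, -, rfl⟩ := hH
  exact hc.toSubgraph_eq_of_le hw ((toSubgraph_le_iff hc.not_nil).mpr (by simpa using hTH))

theorem exists_isOddCycleSubgraph_edgeSet_subset {u : V} (c : G.Walk u u) (hc : Odd c.length) :
    ∃ T : G.Subgraph, IsOddCycleSubgraph G T ∧ T.edgeSet ⊆ c.edgeSet := by
  obtain ⟨x, c', hc', hodd, hsub⟩ := c.exists_odd_isCycle_of_odd_length hc
  exact ⟨c'.toSubgraph, ⟨x, c', hc', hodd, rfl⟩,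
    by rw [edgeSet_toSubgraph]; exact fun e he => hsub he⟩

theorem exists_two_other_odd_cycles_of_arcs {H₁ H₂ : G.Subgraph} {a b : V}
    (h₁ : IsOddCycleSubgraph G H₁) (hab : ∀ R : G.Walk a b, ¬R.edgeSet ⊆ H₁.edgeSet ∩ H₂.edgeSet)
    {P₁ Q₁ : G.Walk a b} {P₂ Q₂ : G.Walk b a}
    (hP : P₁.edgeSet ∪ P₂.edgeSet = H₁.edgeSet) (hPd : Disjoint P₁.edgeSet P₂.edgeSet)
    (hQ : Q₁.edgeSet ∪ Q₂.edgeSet = H₂.edgeSet) (hQd : Disjoint Q₁.edgeSet Q₂.edgeSet)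
    (hodd₁ : Odd (P₁.length + Q₁.length)) (hodd₂ : Odd (P₂.length + Q₂.length)) :
    ∃ T₁ T₂ : G.Subgraph, IsOddCycleSubgraph G T₁ ∧ IsOddCycleSubgraph G T₂ ∧
      H₁ ≠ T₁ ∧ H₁ ≠ T₂ ∧ H₂ ≠ T₁ ∧ H₂ ≠ T₂ ∧ T₁ ≠ T₂ := by
  have hba (R : G.Walk b a) : ¬R.edgeSet ⊆ H₁.edgeSet ∩ H₂.edgeSet := by
    simpa using hab R.reverse
  obtain ⟨T₁, hT₁, hT₁P⟩ :=
    exists_isOddCycleSubgraph_edgeSet_subset (P₁.append Q₁.reverse) (by simpa using hodd₁)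
  obtain ⟨T₂, hT₂, hT₂P⟩ :=
    exists_isOddCycleSubgraph_edgeSet_subset (P₂.append Q₂.reverse) (by simpa using hodd₂)
  rw [edgeSet_append, edgeSet_reverse] at hT₁P hT₂P
  rw [Set.disjoint_left] at hPd hQd
  have h₁₁ : H₁ ≠ T₁ := by rintro rfl; exact hba P₂ (by rw [← hP, ← hQ] at *; grind)
  refine ⟨T₁, T₂, hT₁, hT₂, h₁₁, ?_, ?_, ?_, fun h => h₁₁ ?_⟩
  · rintro rfl; exact hab P₁ (by rw [← hP, ← hQ] at *; grind)
  · rintro rfl; exact hba Q₂ (by rw [← hP, ← hQ] at *; grind)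
  · rintro rfl; exact hab Q₁ (by rw [← hP, ← hQ] at *; grind)
  · subst h
    refine (hT₁.eq_of_edgeSet_subset h₁ ?_).symm
    rw [← hP]; grind

theorem exists_two_other_odd_cycles_of_not_joined {H₁ H₂ : G.Subgraph}
    (h₁ : IsOddCycleSubgraph G H₁) (h₂ : IsOddCycleSubgraph G H₂) {a b : V}
    (ha : a ∈ (H₁ ⊓ H₂).verts) (hb : b ∈ (H₁ ⊓ H₂).verts)
    (hab : ∀ p : G.Walk a b, ¬p.toSubgraph ≤ H₁ ⊓ H₂) :
    ∃ T₁ T₂ : G.Subgraph, IsOddCycleSubgraph G T₁ ∧ IsOddCycleSubgraph G T₂ ∧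
      H₁ ≠ T₁ ∧ H₁ ≠ T₂ ∧ H₂ ≠ T₁ ∧ H₂ ≠ T₂ ∧ T₁ ≠ T₂ := by
  have hne : a ≠ b := by
    rintro rfl
    exact hab nil (by simpa using ha)
  have hab' (R : G.Walk a b) : ¬R.edgeSet ⊆ H₁.edgeSet ∩ H₂.edgeSet := fun hR =>
    hab R ((toSubgraph_le_iff fun h => hne h.eq).mpr (by rwa [Subgraph.edgeSet_inf]))
  obtain ⟨u₁, w₁, hw₁, hodd₁, rfl⟩ := id h₁
  obtain ⟨u₂, w₂, hw₂, hodd₂, rfl⟩ := id h₂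
  obtain ⟨P₁, P₂, hPlen, hP, hPd⟩ :=
    hw₁.exists_arcs (w₁.mem_verts_toSubgraph.mp ha.1) (w₁.mem_verts_toSubgraph.mp hb.1)
  obtain ⟨Q₁, Q₂, hQlen, hQ, hQd⟩ :=
    hw₂.exists_arcs (w₂.mem_verts_toSubgraph.mp ha.2) (w₂.mem_verts_toSubgraph.mp hb.2)
  rw [← w₁.edgeSet_toSubgraph] at hP
  rw [← w₂.edgeSet_toSubgraph] at hQ
  rw [← hPlen] at hodd₁
  rw [← hQlen] at hodd₂
  rcases Nat.even_or_odd (P₁.length + Q₁.length) with hpar | hpar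
  · refine exists_two_other_odd_cycles_of_arcs h₁ hab' (Q₁ := Q₂.reverse) (Q₂ := Q₁.reverse)
      hP hPd (by simpa [Set.union_comm] using hQ) (by simpa using hQd.symm) ?_ ?_ <;>
    · simp only [length_reverse]
      grind
  · exact exists_two_other_odd_cycles_of_arcs h₁ hab' hP hPd hQ hQd hpar (by grind)

theorem three_odd_cycles_intersections_general {V : Type} (G : SimpleGraph V)
    (hcyc : {H : G.Subgraph | IsOddCycleSubgraph G H}.ncard = 3)
    (H₁ H₂ : G.Subgraph) (h₁ : IsOddCycleSubgraph G H₁) (h₂ : IsOddCycleSubgraph G H₂)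
    (hne : H₁ ≠ H₂) :
    H₁ ⊓ H₂ = ⊥ ∨ IsPathSubgraph G (H₁ ⊓ H₂) := by
  by_cases hconn : (H₁ ⊓ H₂).Connected
  · have hlt : H₁ ⊓ H₂ < H₁ := inf_le_left.lt_of_ne fun h =>
      hne (h₁.eq_of_edgeSet_subset h₂ (Subgraph.edgeSet_mono (inf_eq_left.mp h)))
    obtain ⟨u, w, hw, -, rfl⟩ := h₁
    exact .inr (hw.exists_isPath_toSubgraph_eq_of_lt hlt hconn)
  left
  rw [Subgraph.eq_bot_iff_verts_eq_empty, ← Set.not_nonempty_iff_eq_empty]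
  intro hverts
  obtain ⟨a, b, ha, hb, hab⟩ : ∃ a b, a ∈ (H₁ ⊓ H₂).verts ∧ b ∈ (H₁ ⊓ H₂).verts ∧
      ∀ p : G.Walk a b, ¬p.toSubgraph ≤ H₁ ⊓ H₂ := by
    rw [Subgraph.connected_iff_forall_exists_walk_subgraph] at hconn
    push Not at hconn
    exact hconn hverts
  obtain ⟨T₁, T₂, hT₁, hT₂, h₁₁, h₁₂, h₂₁, h₂₂, hT⟩ :=
    exists_two_other_odd_cycles_of_not_joined h₁ h₂ ha hb hab
  have hfour := Set.ncard_eq_four.mpr ⟨H₁, H₂, T₁, T₂, hne, h₁₁, h₁₂, h₂₁, h₂₂, hT, rfl⟩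
  have hle : ({H₁, H₂, T₁, T₂} : Set G.Subgraph).ncard ≤ 3 :=
    hcyc ▸ Set.ncard_le_ncard (by rintro _ (rfl | rfl | rfl | rfl) <;> assumption)
      (Set.finite_of_ncard_ne_zero (by omega))
  omega

/-- Lemma 2.3: if `G` has exactly three odd cycles, then the intersection of every two of
its odd cycles is either empty or a path. -/
theorem three_odd_cycles_intersections {V : Type} [Fintype V] (G : SimpleGraph V)
    (hcyc : {H : G.Subgraph | IsOddCycleSubgraph G H}.ncard = 3)
    (H₁ H₂ : G.Subgraph) (h₁ : IsOddCycleSubgraph G H₁) (h₂ : IsOddCycleSubgraph G H₂)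
    (hne : H₁ ≠ H₂) :
    H₁ ⊓ H₂ = ⊥ ∨ IsPathSubgraph G (H₁ ⊓ H₂) :=
  three_odd_cycles_intersections_general G hcyc H₁ H₂ h₁ h₂ hne
end

section
/- There are no $(3,2)$-critical graphs that contain exactly three odd cycles. -/
open SimpleGraph

/-!
Let `G` be `(3,2)`-critical. As `esχ(G) = 2`, no single edge lies on every odd cycle. By
criticality, for each edge `g` the graph `G - g` (still `3`-chromatic if some odd cycle avoids `g`)
becomes bipartite after deleting one more edge `h`, so any two odd cycles avoiding `g` share `h`.

Suppose the odd cycles were exactly `C₁, C₂, C₃`. For any `f : V → Bool` an odd cycle has an odd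
number of `f`-monochromatic edges, hence so does `T = C₁ ∆ C₂ ∆ C₃`; thus `T` is not bipartite and
contains an odd cycle, which must be some `Cᵢ ⊆ T`. As no edge lies on all three cycles, this `Cᵢ`
is edge-disjoint from the other two, say `C₃`. Taking `g` in `C₁ \ C₂` (or `C₂ \ C₁`), the cycles
`C₂` and `C₃` (or `C₁` and `C₃`) avoid `g` and so share an edge, a contradiction.
-/

open scoped symmDiff Finset

theorem Finset.odd_card_symmDiff_iff {α : Type*} [DecidableEq α] (s t : Finset α) :
    Odd #(s ∆ t) ↔ ¬(Odd #s ↔ Odd #t) := by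
  have hst : #(s ∆ t) = #(s \ t) + #(t \ s) := by
    rw [symmDiff_def, Finset.sup_eq_union, Finset.card_union_of_disjoint disjoint_sdiff_sdiff]
  have hs := Finset.card_sdiff_add_card_inter s t
  have ht := Finset.card_sdiff_add_card_inter t s
  rw [Finset.inter_comm] at ht
  simp only [Nat.odd_iff]
  omega

theorem Finset.filter_symmDiff {α : Type*} [DecidableEq α] (p : α → Prop) [DecidablePred p]
    (s t : Finset α) : {a ∈ s ∆ t | p a} = {a ∈ s | p a} ∆ {a ∈ t | p a} := by
  ext
  simp only [Finset.mem_filter, Finset.mem_symmDiff]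
  tauto

theorem Set.disjoint_of_subset_symmDiff {α : Type*} {s t u : Set α} (h : s ⊆ s ∆ t ∆ u)
    (hstu : ∀ a ∈ s, a ∈ t → a ∉ u) : Disjoint s t ∧ Disjoint s u := by
  refine ⟨Set.disjoint_left.2 fun a hs ht => ?_, Set.disjoint_left.2 fun a hs hu => ?_⟩ <;>
    have := h hs <;> simp only [Set.mem_symmDiff] at this <;> tauto

theorem ENat.add_one_eq_three_iff {x : ℕ∞} : x + 1 = 3 ↔ x = 2 :=
  ⟨fun h => ENat.add_left_injective_of_ne_top ENat.one_ne_top (show x + 1 = 2 + 1 from h),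
    fun h => h ▸ rfl⟩

namespace SimpleGraph

variable {V : Type} {G : SimpleGraph V}

theorem Walk.exists_isPath_or_exists_odd_isCycle {u v : V} (p : G.Walk u v) :
    (∃ q : G.Walk u v, q.IsPath ∧ (Even q.length ↔ Even p.length)) ∨
      ∃ (x : V) (c : G.Walk x x), c.IsCycle ∧ Odd c.length := by
  classical
  induction p with
  | nil => exact .inl ⟨.nil, .nil, Iff.rfl⟩
  | @cons u x v h p ih =>
    obtain ⟨q, hq, hpar⟩ | hc := ih
    · by_cases hu : u ∈ q.support
      · have hsplit := congrArg Walk.length (q.take_spec hu)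
        rw [Walk.length_append] at hsplit
        rcases Nat.even_or_odd (q.takeUntil u hu).length with he | ho
        · -- the path `q.takeUntil u` from `x` back to `u` has even length, so it is not the edge `xu`
          refine .inr ⟨u, .cons h (q.takeUntil u hu), ?_, by simpa [Nat.odd_add_one] using he⟩
          refine (Walk.cons_isCycle_iff _ h).2 ⟨hq.takeUntil hu, fun hmem => ?_⟩
          have := (hq.takeUntil hu).length_eq_one_of_mem_edges (Sym2.eq_swap ▸ hmem)
          simp [this] at he
        · refine .inl ⟨q.dropUntil u hu, hq.dropUntil hu, ?_⟩
          rw [Walk.length_cons, Nat.even_add_one, ← hpar, ← hsplit, Nat.even_add]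
          simp [Nat.not_even_iff_odd.2 ho]
      · exact .inl ⟨.cons h q, hq.cons hu, by simp [Nat.even_add_one, hpar]⟩
    · exact .inr hc

theorem two_colorable_iff_forall_isCycle_even :
    G.Colorable 2 ↔ ∀ (u : V) (c : G.Walk u u), c.IsCycle → Even c.length := by
  refine two_colorable_iff_forall_loop_even.trans ⟨fun h u c _ => h u c, fun h u w => ?_⟩
  obtain ⟨q, hq, hpar⟩ | ⟨x, c, hc, ho⟩ := w.exists_isPath_or_exists_odd_isCycle
  · rw [← hpar, Walk.length_eq_zero_iff.2 (Walk.isPath_iff_nil.1 hq)]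
    exact Nat.even_iff.2 rfl
  · exact absurd (h x c hc) (Nat.not_even_iff_odd.2 ho)

theorem two_colorable_deleteEdges_iff (S : Set (Sym2 V)) :
    (G.deleteEdges S).Colorable 2 ↔
      ∀ (u : V) (c : G.Walk u u), c.IsCycle → Odd c.length → ∃ e ∈ c.edges, e ∈ S := by
  rw [two_colorable_iff_forall_isCycle_even]
  constructor
  · intro h u c hc ho
    by_contra! hS
    have := h u (c.toDeleteEdges S hS) (hc.toDeleteEdges G S hS)
    simp [Nat.not_even_iff_odd.2 ho] at this
  · intro h u c hc
    by_contra hodd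
    obtain ⟨e, he, heS⟩ := h u (c.mapLe (deleteEdges_le S)) (by simpa using hc)
      (by simpa using hodd)
    rw [Walk.edges_mapLe_eq_edges] at he
    exact (edgeSet_deleteEdges S ▸ c.edges_subset_edgeSet he).2 heS

theorem exists_odd_isCycle_of_two_lt_chromaticNumber (h : 2 < G.chromaticNumber) :
    ∃ (u : V) (c : G.Walk u u), c.IsCycle ∧ Odd c.length := by
  by_contra! hc
  exact h.not_ge (two_colorable_iff_forall_isCycle_even.2
    fun u c hc' => Nat.not_odd_iff_even.1 (hc u c hc')).chromaticNumber_le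

theorem chromaticNumber_deleteEdges_eq_two {S : Set (Sym2 V)}
    (hS : ∀ (u : V) (c : G.Walk u u), c.IsCycle → Odd c.length → ∃ e ∈ c.edges, e ∈ S)
    {e : Sym2 V} (he : e ∈ G.edgeSet) (heS : e ∉ S) :
    (G.deleteEdges S).chromaticNumber = 2 :=
  chromaticNumber_eq_two_iff.2
    ⟨(two_colorable_deleteEdges_iff S).2 hS, edgeSet_nonempty.1 ⟨e, by simp [he, heS]⟩⟩

theorem Walk.IsCycle.exists_mem_edges_ne {u : V} {c : G.Walk u u} (hc : c.IsCycle) (e : Sym2 V) :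
    ∃ e' ∈ c.edges, e' ≠ e := by
  by_contra! h
  have := List.nodup_replicate.1 (List.eq_replicate_iff.2 ⟨rfl, h⟩ ▸ hc.edges_nodup)
  have := hc.three_le_length
  simp only [Walk.length_edges] at *
  omega

theorem Walk.toSubgraph_eq_of_edgeSet_eq {u v u' v' : V} {p : G.Walk u v} {q : G.Walk u' v'}
    (hp : ¬p.Nil) (hq : ¬q.Nil) (h : p.edgeSet = q.edgeSet) : p.toSubgraph = q.toSubgraph :=
  le_antisymm ((Walk.toSubgraph_le_iff hp).2 (by rw [Walk.edgeSet_toSubgraph, h]))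
    ((Walk.toSubgraph_le_iff hq).2 (by rw [Walk.edgeSet_toSubgraph, h]))

theorem Walk.odd_countP_isDiag_map_iff (f : V → Bool) {u v : V} (p : G.Walk u v) :
    Odd (p.edges.countP fun e => (e.map f).IsDiag) ↔ (Odd p.length ↔ f u = f v) := by
  induction p with
  | nil => simp
  | @cons u x v h p ih =>
    simp only [Walk.edges_cons, List.countP_cons, Walk.length_cons, Sym2.map_mk,
      Sym2.mk_isDiag_iff, decide_eq_true_eq]
    split_ifs with hux
    · rw [Nat.odd_add_one, ih, Nat.odd_add_one, hux]
      tauto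
    · rw [add_zero, ih, Nat.odd_add_one]
      revert hux
      cases f u <;> cases f x <;> cases f v <;> simp

theorem Walk.IsCycle.odd_card_filter_isDiag_map [DecidableEq V] {u : V} {c : G.Walk u u}
    (hc : c.IsCycle) (ho : Odd c.length) (f : V → Bool) :
    Odd #{e ∈ c.edges.toFinset | (e.map f).IsDiag} := by
  have hfilter : {e ∈ c.edges.toFinset | (e.map f).IsDiag} =
      (c.edges.filter fun e => (e.map f).IsDiag).toFinset := by
    ext
    simp
  rw [hfilter, List.toFinset_card_of_nodup (hc.edges_nodup.filter _),
    ← List.countP_eq_length_filter]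
  simpa [ho] using c.odd_countP_isDiag_map_iff f

theorem exists_odd_isCycle_edgeSet_subset (T : Finset (Sym2 V)) (hT : ↑T ⊆ G.edgeSet)
    (hodd : ∀ f : V → Bool, Odd #{e ∈ T | (e.map f).IsDiag}) :
    ∃ (u : V) (c : G.Walk u u), c.IsCycle ∧ Odd c.length ∧ c.edgeSet ⊆ T := by
  by_contra! h
  have hcol : (G.deleteEdges (↑T)ᶜ).Colorable 2 :=
    (two_colorable_deleteEdges_iff _).2 fun u c hc ho => by
      by_contra! hin
      exact h u c hc ho fun e he => by simpa using hin e he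
  let col := recolorOfEquiv _ finTwoEquiv hcol.some
  have hbichromatic : ∀ e ∈ T, ¬(e.map col).IsDiag := by
    intro e he
    induction e with
    | _ a b =>
      have hadj : (G.deleteEdges (↑T)ᶜ).Adj a b := by simpa [he] using hT he
      simpa using col.valid hadj
  simpa [Finset.filter_false_of_mem hbichromatic] using hodd col

theorem exists_odd_isCycle_edgeSet_subset_symmDiff {u₁ u₂ u₃ : V} {c₁ : G.Walk u₁ u₁}
    {c₂ : G.Walk u₂ u₂} {c₃ : G.Walk u₃ u₃} (hc₁ : c₁.IsCycle) (ho₁ : Odd c₁.length)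
    (hc₂ : c₂.IsCycle) (ho₂ : Odd c₂.length) (hc₃ : c₃.IsCycle) (ho₃ : Odd c₃.length) :
    ∃ (u : V) (c : G.Walk u u), c.IsCycle ∧ Odd c.length ∧
      c.edgeSet ⊆ c₁.edgeSet ∆ c₂.edgeSet ∆ c₃.edgeSet := by
  classical
  have hT : (↑(c₁.edges.toFinset ∆ c₂.edges.toFinset ∆ c₃.edges.toFinset) : Set (Sym2 V)) =
      c₁.edgeSet ∆ c₂.edgeSet ∆ c₃.edgeSet := by
    simp only [Finset.coe_symmDiff, List.coe_toFinset]
    rfl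
  rw [← hT]
  refine exists_odd_isCycle_edgeSet_subset _ (fun e he => ?_) fun f => ?_
  · simp only [Finset.coe_symmDiff, Set.mem_symmDiff, List.coe_toFinset] at he
    rcases he with ⟨⟨he, -⟩ | ⟨he, -⟩, -⟩ | ⟨he, -⟩
    exacts [c₁.edges_subset_edgeSet he, c₂.edges_subset_edgeSet he, c₃.edges_subset_edgeSet he]
  · have := hc₁.odd_card_filter_isDiag_map ho₁ f
    have := hc₂.odd_card_filter_isDiag_map ho₂ f
    have := hc₃.odd_card_filter_isDiag_map ho₃ f
    rw [Finset.filter_symmDiff, Finset.filter_symmDiff, Finset.odd_card_symmDiff_iff,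
      Finset.odd_card_symmDiff_iff]
    tauto

end SimpleGraph

section Critical

variable {V : Type} {G : SimpleGraph V}

/-- `esChi G` is an `sInf` in `ℕ`, hence `0` when no edge set works; when `χ(G) = 3` deleting all
edges but one does work. -/
theorem exists_card_eq_esChi [Finite V] (hχ : G.chromaticNumber = 3) :
    ∃ F : Finset (Sym2 V), ↑F ⊆ G.edgeSet ∧ F.card = esChi G ∧
      (G.deleteEdges ↑F).chromaticNumber + 1 = G.chromaticNumber := by
  classical
  obtain ⟨u, c, hc, -⟩ := exists_odd_isCycle_of_two_lt_chromaticNumber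
    (by rw [hχ]; norm_num)
  have he₀ : s(u, c.snd) ∈ G.edgeSet := c.adj_snd hc.not_nil
  generalize s(u, c.snd) = e₀ at he₀
  have hE : G.edgeSet.Finite := Set.toFinite _
  refine Nat.sInf_mem (s := {n | ∃ F : Finset (Sym2 V), ↑F ⊆ G.edgeSet ∧ F.card = n ∧
    (G.deleteEdges ↑F).chromaticNumber + 1 = G.chromaticNumber})
    ⟨_, hE.toFinset.erase e₀, by simp, rfl, ?_⟩
  rw [chromaticNumber_deleteEdges_eq_two (fun v d hd _ => ?_) he₀ (by simp), hχ]
  · rfl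
  obtain ⟨e, he, hne⟩ := hd.exists_mem_edges_ne e₀
  exact ⟨e, he, by simp [hne, d.edges_subset_edgeSet he]⟩

theorem exists_odd_isCycle_notMem_edges (hχ : G.chromaticNumber = 3) (hes : 1 < esChi G)
    (h : Sym2 V) : ∃ (u : V) (c : G.Walk u u), c.IsCycle ∧ Odd c.length ∧ h ∉ c.edges := by
  by_contra! hall
  obtain ⟨u, c, hc, ho⟩ := exists_odd_isCycle_of_two_lt_chromaticNumber (by rw [hχ]; norm_num)
  obtain ⟨e, he, hne⟩ := hc.exists_mem_edges_ne h
  have hχh : (G.deleteEdges {h}).chromaticNumber = 2 :=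
    chromaticNumber_deleteEdges_eq_two (fun u c hc ho => ⟨h, hall u c hc ho, rfl⟩)
      (c.edges_subset_edgeSet he) hne
  have : esChi G ≤ 1 := Nat.sInf_le ⟨{h}, by simpa using c.edges_subset_edgeSet (hall u c hc ho),
    Finset.card_singleton h, by rw [Finset.coe_singleton, hχ, ENat.add_one_eq_three_iff, hχh]⟩
  omega

theorem EdgeStabilityCritical.not_disjoint_edgeSet [Finite V]
    (hcrit : EdgeStabilityCritical G) (hχ : G.chromaticNumber = 3) (hes : esChi G ≤ 2)
    {g : Sym2 V} (hg : g ∈ G.edgeSet) {u v : V} {p : G.Walk u u} {q : G.Walk v v}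
    (hp : p.IsCycle) (hop : Odd p.length) (hgp : g ∉ p.edges)
    (hq : q.IsCycle) (hoq : Odd q.length) (hgq : g ∉ q.edges) :
    ¬Disjoint p.edgeSet q.edgeSet := by
  have hχg : (G.deleteEdges {g}).chromaticNumber = 3 :=
    le_antisymm (hχ ▸ chromaticNumber_mono _ (deleteEdges_le _))
      ((p.toDeleteEdges {g} fun e he hge => hgp (hge ▸ he)).three_le_chromaticNumber_of_odd_loop
        (by simpa using hop))
  obtain ⟨F, -, hFcard, hFχ⟩ := exists_card_eq_esChi hχg
  have hF : F.card = 1 := by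
    have hF0 : F.card ≠ 0 := by
      intro h0
      rw [Finset.card_eq_zero.1 h0, Finset.coe_empty, deleteEdges_empty, hχg] at hFχ
      exact absurd hFχ (by decide)
    have := hcrit g hg
    omega
  obtain ⟨h, rfl⟩ := Finset.card_eq_one.1 hF
  rw [hχg, ENat.add_one_eq_three_iff, Finset.coe_singleton, deleteEdges_deleteEdges] at hFχ
  have hcol := (two_colorable_deleteEdges_iff _).1 (chromaticNumber_le_iff_colorable.1 hFχ.le)
  have hmem : ∀ {w : V} (c : G.Walk w w), c.IsCycle → Odd c.length → g ∉ c.edges → h ∈ c.edges := by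
    intro w c hc ho hgc
    obtain ⟨e, he, rfl | rfl⟩ := hcol w c hc ho
    exacts [absurd he hgc, he]
  exact Set.not_disjoint_iff.2 ⟨h, hmem p hp hop hgp, hmem q hq hoq hgq⟩

theorem IsKLCritical.not_disjoint_edgeSet [Finite V] (hG : IsKLCritical G 3 2)
    {u₁ u₂ u₃ : V} {c₁ : G.Walk u₁ u₁} {c₂ : G.Walk u₂ u₂} {c₃ : G.Walk u₃ u₃}
    (hc₁ : c₁.IsCycle) (ho₁ : Odd c₁.length) (hc₂ : c₂.IsCycle) (ho₂ : Odd c₂.length)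
    (hc₃ : c₃.IsCycle) (ho₃ : Odd c₃.length) (h₁₂ : c₁.edgeSet ≠ c₂.edgeSet)
    (h₃₁ : Disjoint c₃.edgeSet c₁.edgeSet) : ¬Disjoint c₃.edgeSet c₂.edgeSet := by
  obtain ⟨hcrit, hχ, hes⟩ := hG
  rw [Nat.cast_ofNat] at hχ
  intro h₃₂
  obtain ⟨g, ⟨hg₁, hg₂⟩ | ⟨hg₂, hg₁⟩⟩ := Set.symmDiff_nonempty.2 h₁₂
  · exact hcrit.not_disjoint_edgeSet hχ hes.le (c₁.edges_subset_edgeSet hg₁) hc₃ ho₃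
      (h₃₁.notMem_of_mem_right hg₁) hc₂ ho₂ hg₂ h₃₂
  · exact hcrit.not_disjoint_edgeSet hχ hes.le (c₂.edges_subset_edgeSet hg₂) hc₃ ho₃
      (h₃₂.notMem_of_mem_right hg₂) hc₁ ho₁ hg₁ h₃₁

theorem IsKLCritical.exists_odd_isCycle_edgeSet_ne [Finite V] (hG : IsKLCritical G 3 2)
    {u₁ u₂ u₃ : V} {c₁ : G.Walk u₁ u₁} {c₂ : G.Walk u₂ u₂} {c₃ : G.Walk u₃ u₃}
    (hc₁ : c₁.IsCycle) (ho₁ : Odd c₁.length) (hc₂ : c₂.IsCycle) (ho₂ : Odd c₂.length)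
    (hc₃ : c₃.IsCycle) (ho₃ : Odd c₃.length) (h₁₂ : c₁.edgeSet ≠ c₂.edgeSet)
    (h₁₃ : c₁.edgeSet ≠ c₃.edgeSet) (h₂₃ : c₂.edgeSet ≠ c₃.edgeSet) :
    ∃ (u : V) (c : G.Walk u u), c.IsCycle ∧ Odd c.length ∧
      c.edgeSet ≠ c₁.edgeSet ∧ c.edgeSet ≠ c₂.edgeSet ∧ c.edgeSet ≠ c₃.edgeSet := by
  by_contra! hall
  replace hall : ∀ {u : V} (c : G.Walk u u), c.IsCycle → Odd c.length →
      c.edgeSet = c₁.edgeSet ∨ c.edgeSet = c₂.edgeSet ∨ c.edgeSet = c₃.edgeSet :=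
    fun c hc ho => by have := hall _ c hc ho; tauto
  have hno_triple : ∀ e ∈ c₁.edgeSet, e ∈ c₂.edgeSet → e ∉ c₃.edgeSet := by
    intro e he₁ he₂ he₃
    have hχ : G.chromaticNumber = 3 := by rw [hG.2.1, Nat.cast_ofNat]
    obtain ⟨u, c, hc, ho, he⟩ := exists_odd_isCycle_notMem_edges hχ (by rw [hG.2.2]; omega) e
    rw [← Walk.mem_edgeSet] at he
    rcases hall c hc ho with h | h | h <;> rw [h] at he
    exacts [he he₁, he he₂, he he₃]
  obtain ⟨u, c, hc, ho, hsub⟩ := exists_odd_isCycle_edgeSet_subset_symmDiff hc₁ ho₁ hc₂ ho₂ hc₃ ho₃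
  rcases hall c hc ho with h | h | h <;> rw [h] at hsub
  · obtain ⟨h₁₂', h₁₃'⟩ := Set.disjoint_of_subset_symmDiff hsub hno_triple
    exact hG.not_disjoint_edgeSet hc₂ ho₂ hc₃ ho₃ hc₁ ho₁ h₂₃ h₁₂' h₁₃'
  · rw [symmDiff_comm c₁.edgeSet] at hsub
    obtain ⟨h₂₁', h₂₃'⟩ := Set.disjoint_of_subset_symmDiff hsub fun e he₂ he₁ => hno_triple e he₁ he₂
    exact hG.not_disjoint_edgeSet hc₁ ho₁ hc₃ ho₃ hc₂ ho₂ h₁₃ h₂₁' h₂₃'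
  · rw [symmDiff_comm, ← symmDiff_assoc] at hsub
    obtain ⟨h₃₁', h₃₂'⟩ := Set.disjoint_of_subset_symmDiff hsub
      fun e he₃ he₁ he₂ => hno_triple e he₁ he₂ he₃
    exact hG.not_disjoint_edgeSet hc₁ ho₁ hc₂ ho₂ hc₃ ho₃ h₁₂ h₃₁' h₃₂'

end Critical

/-- Theorem 2.4: there are no `(3,2)`-critical graphs containing exactly three odd cycles. -/
theorem no_three_odd_cycles {V : Type} [Fintype V] (G : SimpleGraph V)
    (hcyc : {H : G.Subgraph | IsOddCycleSubgraph G H}.ncard = 3) :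
    ¬ IsKLCritical G 3 2 := by
  intro hG
  obtain ⟨A, B, C, hAB, hAC, hBC, hset⟩ := Set.ncard_eq_three.1 hcyc
  have hmem : ∀ H, IsOddCycleSubgraph G H ↔ H = A ∨ H = B ∨ H = C := fun H => by
    simpa using Set.ext_iff.1 hset H
  obtain ⟨u₁, c₁, hc₁, ho₁, rfl⟩ := (hmem A).2 (.inl rfl)
  obtain ⟨u₂, c₂, hc₂, ho₂, rfl⟩ := (hmem B).2 (.inr (.inl rfl))
  obtain ⟨u₃, c₃, hc₃, ho₃, rfl⟩ := (hmem C).2 (.inr (.inr rfl))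
  obtain ⟨u, c, hc, ho, hne⟩ := hG.exists_odd_isCycle_edgeSet_ne hc₁ ho₁ hc₂ ho₂ hc₃ ho₃
    (mt (Walk.toSubgraph_eq_of_edgeSet_eq hc₁.not_nil hc₂.not_nil) hAB)
    (mt (Walk.toSubgraph_eq_of_edgeSet_eq hc₁.not_nil hc₃.not_nil) hAC)
    (mt (Walk.toSubgraph_eq_of_edgeSet_eq hc₂.not_nil hc₃.not_nil) hBC)
  simp only [← Walk.edgeSet_toSubgraph] at hne
  rcases (hmem _).1 ⟨u, c, hc, ho, rfl⟩ with h | h | h <;> simp [h] at hne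
end

section
/- If $G$ is a $(3,2)$-critical graph that contains at least three odd cycles, then there exist two odd cycles of $G$ whose intersection is a path with at least one edge. -/
open SimpleGraph

/-!
Deleting the two edges of a set `F` witnessing `esχ(G) = 2` leaves a bipartite graph; fix a
2-colouring `c` of it. Along a closed walk the number of `c`-monochromatic edges has the parity of
the length, and only edges of `F` can be monochromatic, so every odd cycle contains exactly one
monochromatic edge. By pigeonhole, two distinct odd cycles `m + P` and `m + Q` share their
monochromatic edge `m = ab`. Where `P` first leaves `Q` and then first returns to it, `P` provides
a detour `D` around a segment of `Q`. Replacing that segment by `D` gives a cycle `m + Q'` whose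
only monochromatic edge is `m`, so it is odd, and it meets `m + Q` exactly in `m` together with
the two end segments of `Q`, which form a path.
-/

namespace SimpleGraph.Walk

variable {V : Type} {G : SimpleGraph V}

theorem even_length_add_countP_isDiag_iff (c : V → Bool) {u v : V} (w : G.Walk u v) :
    Even (w.length + w.edges.countP (fun e => (e.map c).IsDiag)) ↔ c u = c v := by
  induction w with
  | nil => simp
  | @cons u x v h w ih =>
    simp only [length_cons, edges_cons, List.countP_cons, Sym2.map_mk, Sym2.mk_isDiag_iff,
      decide_eq_true_eq]
    by_cases hux : c u = c x
    · rw [if_pos hux, hux, ← ih, show ∀ m n : ℕ, m + 1 + (n + 1) = m + n + 1 + 1 by omega,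
        Nat.even_add_one, Nat.even_add_one, not_not]
    · rw [if_neg hux, add_zero, add_right_comm, Nat.even_add_one, ih]
      cases hu : c u <;> cases hx : c x <;> simp_all

theorem isPath_append_iff {u v w : V} {p : G.Walk u v} {q : G.Walk v w} :
    (p.append q).IsPath ↔ p.IsPath ∧ q.IsPath ∧ ∀ z ∈ p.support, z ∈ q.support → z = v := by
  have hq := q.cons_tail_support.symm
  have hv := p.end_mem_support
  rw [isPath_def, isPath_def, isPath_def, support_append, List.nodup_append, hq, List.nodup_cons]
  simp only [List.mem_cons]
  grind

theorem IsCycle.exists_cons_eq_or_eq_reverse {a b : V} {c : G.Walk a a} (hc : c.IsCycle)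
    (hab : c.toSubgraph.Adj a b) :
    ∃ (h : G.Adj a b) (p : G.Walk b a), cons h p = c ∨ cons h p = c.reverse := by
  have cons_of_snd : ∀ c' : G.Walk a a, ¬ c'.Nil → c'.snd = b →
      ∃ (h : G.Adj a b) (p : G.Walk b a), cons h p = c' := by
    rintro (_ | ⟨h, p⟩) hnil hsnd
    · exact absurd .nil hnil
    · rw [snd_cons] at hsnd
      subst hsnd
      exact ⟨h, p, rfl⟩
  have hb : b ∈ c.toSubgraph.neighborSet a := hab
  rw [hc.neighborSet_toSubgraph_endpoint, Set.mem_insert_iff, Set.mem_singleton_iff] at hb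
  rcases hb with hb | hb
  · obtain ⟨h, p, hp⟩ := cons_of_snd c hc.not_nil hb.symm
    exact ⟨h, p, .inl hp⟩
  · obtain ⟨h, p, hp⟩ :=
      cons_of_snd c.reverse (by simpa using hc.not_nil) (by rw [snd_reverse, hb])
    exact ⟨h, p, .inr hp⟩

theorem IsCycle.exists_cons_of_mem_edges {u a b : V} {w : G.Walk u u} (hw : w.IsCycle)
    (hab : s(a, b) ∈ w.edges) :
    ∃ (h : G.Adj a b) (p : G.Walk b a),
      (cons h p).IsCycle ∧ (cons h p).toSubgraph = w.toSubgraph := by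
  classical
  have ha : a ∈ w.support := w.fst_mem_support_of_mem_edges hab
  set c := w.rotate a ha
  have hc : c.IsCycle := hw.rotate ha
  have hAdj : c.toSubgraph.Adj a b := by
    rw [toSubgraph_rotate, ← Subgraph.mem_edgeSet, mem_edges_toSubgraph]
    exact hab
  obtain ⟨h, p, hp | hp⟩ := hc.exists_cons_eq_or_eq_reverse hAdj <;>
    refine ⟨h, p, ?_, ?_⟩ <;> rw [hp] <;>
    simp only [isCycle_reverse, toSubgraph_reverse, hc, c, toSubgraph_rotate]

structure IsDetourOf {a b x y : V} (d : G.Walk x y) (q : G.Walk a b) : Prop where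
  not_nil : ¬ d.Nil
  eq_or_eq_of_mem_support : ∀ z ∈ d.support, z ∈ q.support → z = x ∨ z = y
  notMem_edges : ∀ e ∈ d.edges, e ∉ q.edges

theorem IsDetourOf.ne {a b x y : V} {d : G.Walk x y} {q : G.Walk a b} (hd : d.IsDetourOf q)
    (hdp : d.IsPath) : x ≠ y := by
  rintro rfl
  exact hd.not_nil (isPath_iff_nil.mp hdp)

theorem IsDetourOf.cons {a c b x y : V} {d : G.Walk x y} {q : G.Walk c b}
    (hd : d.IsDetourOf q) (ha : a ∉ d.support) (h : G.Adj a c) : d.IsDetourOf (cons h q) := by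
  refine ⟨hd.not_nil, fun z hz hzq => ?_, fun e he heq => ?_⟩
  · rw [support_cons, List.mem_cons] at hzq
    rcases hzq with rfl | hzq
    · exact absurd hz ha
    · exact hd.eq_or_eq_of_mem_support z hz hzq
  · rw [edges_cons, List.mem_cons] at heq
    rcases heq with rfl | heq
    · exact ha (d.fst_mem_support_of_mem_edges he)
    · exact hd.notMem_edges e he heq

theorem exists_isDetourOf_cons {a c b : V} (h : G.Adj a c) (p : G.Walk c b) {q : G.Walk a b}
    (hac : s(a, c) ∉ q.edges) :
    ∃ (y : V) (d : G.Walk a y), y ∈ q.support ∧ d.IsSubwalk (cons h p) ∧ d.IsDetourOf q := by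
  classical
  obtain ⟨y, hyq, hyp, hfirst⟩ := p.exists_mem_support_forall_mem_support_imp_eq
    q.support.toFinset ⟨b, by simp⟩
  rw [List.mem_toFinset] at hyq
  simp only [List.mem_toFinset] at hfirst
  refine ⟨y, cons h (p.takeUntil y hyp), hyq, ⟨nil, p.dropUntil y hyp, by simp⟩,
    ⟨not_nil_cons, fun z hz hzq => ?_, fun e he heq => ?_⟩⟩
  · rw [support_cons, List.mem_cons] at hz
    exact hz.imp id (hfirst z hzq)
  · rw [edges_cons, List.mem_cons] at he
    rcases he with rfl | he
    · exact hac heq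
    · induction e using Sym2.ind with | _ z w =>
      have hz := hfirst z (q.fst_mem_support_of_mem_edges heq)
        ((p.takeUntil y hyp).fst_mem_support_of_mem_edges he)
      have hw := hfirst w (q.snd_mem_support_of_mem_edges heq)
        ((p.takeUntil y hyp).snd_mem_support_of_mem_edges he)
      exact (q.adj_of_mem_edges heq).ne (hz.trans hw.symm)

theorem IsPath.exists_isDetourOf_of_ne {a b : V} {p q : G.Walk a b}
    (hp : p.IsPath) (hq : q.IsPath) (hne : p ≠ q) :
    ∃ (x y : V) (r₁ : G.Walk a x) (r : G.Walk x y) (r₂ : G.Walk y b) (d : G.Walk x y),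
      q = r₁.append (r.append r₂) ∧ d.IsSubwalk p ∧ d.IsDetourOf q := by
  classical
  induction p with
  | nil => exact absurd ((isPath_iff_nil.mp hq).eq_nil).symm hne
  | @cons a c b h p ih =>
    cases q with
    | nil => exact absurd p.end_mem_support ((cons_isPath_iff h p).mp hp).2
    | @cons _ c' _ h' q =>
      by_cases hc : c = c'
      · subst hc
        obtain ⟨x, y, r₁, r, r₂, d, rfl, hsub, hdet⟩ :=
          ih hp.of_cons hq.of_cons (fun hpq => hne (by rw [hpq]))
        have had : a ∉ d.support := fun ha =>
          ((cons_isPath_iff h p).mp hp).2 (hsub.support_subset ha)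
        exact ⟨x, y, cons h r₁, r, r₂, d, rfl, hsub.cons h, hdet.cons had h'⟩
      · have hac : s(a, c) ∉ (cons h' q).edges := by
          rw [edges_cons, List.mem_cons, Sym2.eq_iff]
          rintro ((⟨-, rfl⟩ | ⟨-, rfl⟩) | hmem)
          · exact hc rfl
          · exact h.ne rfl
          · exact ((cons_isPath_iff h' q).mp hq).2 (q.fst_mem_support_of_mem_edges hmem)
        obtain ⟨y, d, hy, hsub, hdet⟩ := exists_isDetourOf_cons h p hac
        exact ⟨a, y, Walk.nil, _, _, d, (take_spec _ hy).symm, hsub, hdet⟩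

section Splice

variable {a b x y : V} {r₁ : G.Walk a x} {r : G.Walk x y} {r₂ : G.Walk y b}

theorem IsPath.disjoint_support_of_append_append (hq : (r₁.append (r.append r₂)).IsPath)
    (hxy : x ≠ y) : ∀ z ∈ r₁.support, z ∉ r₂.support := by
  intro z h₁ h₂
  obtain ⟨-, hrr, hq₁⟩ := isPath_append_iff.mp hq
  obtain rfl : z = x := hq₁ z h₁ ((mem_support_append_iff _ _).mpr (.inr h₂))
  exact hxy ((isPath_append_iff.mp hrr).2.2 z r.start_mem_support h₂)

theorem IsDetourOf.isPath_splice {d : G.Walk x y} (hq : (r₁.append (r.append r₂)).IsPath)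
    (hd : d.IsDetourOf (r₁.append (r.append r₂))) (hdp : d.IsPath) :
    (r₁.append (d.append r₂)).IsPath := by
  have hdis := hq.disjoint_support_of_append_append (hd.ne hdp)
  obtain ⟨hr₁, hrr, -⟩ := isPath_append_iff.mp hq
  have hmem₁ : ∀ z ∈ r₁.support, z ∈ (r₁.append (r.append r₂)).support := fun z hz => by
    simp [mem_support_append_iff, hz]
  have hmem₂ : ∀ z ∈ r₂.support, z ∈ (r₁.append (r.append r₂)).support := fun z hz => by
    simp [mem_support_append_iff, hz]
  refine isPath_append_iff.mpr ⟨hr₁, isPath_append_iff.mpr ⟨hdp, hrr.of_append_right,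
    fun z hz hz₂ => ?_⟩, fun z hz₁ hz => ?_⟩
  · rcases hd.eq_or_eq_of_mem_support z hz (hmem₂ z hz₂) with rfl | rfl
    · exact absurd hz₂ (hdis z r₁.end_mem_support)
    · rfl
  · rcases (mem_support_append_iff _ _).mp hz with hz | hz₂
    · rcases hd.eq_or_eq_of_mem_support z hz (hmem₁ z hz₁) with rfl | rfl
      · rfl
      · exact absurd r₂.start_mem_support (hdis z hz₁)
    · exact absurd hz₂ (hdis z hz₁)

theorem IsDetourOf.toSubgraph_splice_inf {d : G.Walk x y}
    (hd : d.IsDetourOf (r₁.append (r.append r₂))) :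
    (r₁.append (d.append r₂)).toSubgraph ⊓ (r₁.append (r.append r₂)).toSubgraph =
      r₁.toSubgraph ⊔ r₂.toSubgraph := by
  set q := r₁.append (r.append r₂)
  have hdq : d.toSubgraph ⊓ q.toSubgraph ≤ r₁.toSubgraph ⊔ r₂.toSubgraph := by
    constructor
    · rintro z ⟨hz, hzq⟩
      rcases hd.eq_or_eq_of_mem_support z ((mem_verts_toSubgraph _).mp hz)
        ((mem_verts_toSubgraph _).mp hzq) with rfl | rfl
      · exact .inl r₁.end_mem_verts_toSubgraph
      · exact .inr r₂.start_mem_verts_toSubgraph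
    · rintro u v ⟨hd', hq'⟩
      rw [adj_toSubgraph_iff_mem_edges] at hd' hq'
      exact absurd hq' (hd.notMem_edges _ hd')
  have hq₁ : r₁.toSubgraph ≤ q.toSubgraph := by simp [q, toSubgraph_append]
  have hq₂ : r₂.toSubgraph ≤ q.toSubgraph := by
    simpa [q, toSubgraph_append] using le_sup_of_le_right le_sup_right
  rw [toSubgraph_append, toSubgraph_append, inf_sup_right, inf_sup_right]
  apply le_antisymm
  · exact sup_le (inf_le_left.trans le_sup_left) (sup_le hdq (inf_le_left.trans le_sup_right))
  · exact sup_le (le_sup_of_le_left (le_inf le_rfl hq₁))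
      (le_sup_of_le_right (le_sup_of_le_right (le_inf le_rfl hq₂)))

end Splice

theorem IsCycle.exists_isCycle_cons_inf_isPathSubgraph {a b : V} (h : G.Adj a b)
    {p q : G.Walk b a} (hp : (cons h p).IsCycle) (hq : (cons h q).IsCycle) (hne : p ≠ q) :
    ∃ p' : G.Walk b a, (cons h p').IsCycle ∧ (∀ e ∈ p'.edges, e ∈ p.edges ∨ e ∈ q.edges) ∧
      (cons h p').toSubgraph ≠ (cons h q).toSubgraph ∧
      IsPathSubgraph G ((cons h p').toSubgraph ⊓ (cons h q).toSubgraph) := by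
  rw [cons_isCycle_iff] at hp hq
  obtain ⟨x, y, r₁, r, r₂, d, rfl, hsub, hdet⟩ := hp.1.exists_isDetourOf_of_ne hq.1 hne
  have hdp : d.IsPath := isPath_of_isSubwalk hsub hp.1
  have hdis := hq.1.disjoint_support_of_append_append (hdet.ne hdp)
  have hedges : ∀ e ∈ (r₁.append (d.append r₂)).edges,
      e ∈ p.edges ∨ e ∈ (r₁.append (r.append r₂)).edges := by
    intro e he
    simp only [edges_append, List.mem_append] at he ⊢
    rcases he with he | he | he
    · exact .inr (.inl he)
    · exact .inl (hsub.edges_subset he)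
    · exact .inr (.inr (.inr he))
  refine ⟨r₁.append (d.append r₂), (cons_isCycle_iff _ h).mpr
    ⟨hdet.isPath_splice hq.1 hdp, fun hab => (hedges _ hab).elim hp.2 hq.2⟩, hedges, ?_, ?_⟩
  · obtain ⟨e, he⟩ := List.exists_mem_of_ne_nil _ (edges_eq_nil.not.mpr hdet.not_nil)
    intro heq
    have hecons : e ∈ (cons h (r₁.append (r.append r₂))).edges := by
      rw [← mem_edges_toSubgraph, ← heq, mem_edges_toSubgraph]
      simp [edges_append, he]
    rw [edges_cons, List.mem_cons] at hecons
    rcases hecons with rfl | hecons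
    · exact hp.2 (hsub.edges_subset he)
    · exact hdet.notMem_edges e he hecons
  · obtain ⟨hr₁, hrr, -⟩ := isPath_append_iff.mp hq.1
    refine ⟨y, x, r₂.append (cons h r₁), isPath_append_iff.mpr ⟨hrr.of_append_right,
      (cons_isPath_iff h r₁).mpr ⟨hr₁, fun ha => hdis a ha r₂.end_mem_support⟩, ?_⟩, ?_⟩
    · intro z hz₂ hz
      rw [support_cons, List.mem_cons] at hz
      exact hz.resolve_right fun hz₁ => hdis z hz₁ hz₂
    · rw [toSubgraph_append]
      simp only [Walk.toSubgraph]
      rw [← sup_inf_left, hdet.toSubgraph_splice_inf]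
      ac_rfl

end SimpleGraph.Walk

section OddCycles

variable {V : Type} {G : SimpleGraph V}

theorem SimpleGraph.Coloring.mem_of_isDiag_map {α : Type*} {s : Set (Sym2 V)}
    (C : (G.deleteEdges s).Coloring α) {e : Sym2 V} (he : e ∈ G.edgeSet)
    (hd : (e.map C).IsDiag) : e ∈ s := by
  induction e using Sym2.ind with | _ x y =>
  by_contra hs
  exact C.valid (deleteEdges_adj.mpr ⟨he, hs⟩) (Sym2.mk_isDiag_iff.mp hd)

theorem IsKLCritical.exists_colorable_deleteEdges {k ℓ : ℕ} (hG : IsKLCritical G (k + 1) ℓ)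
    (hℓ : ℓ ≠ 0) : ∃ F : Finset (Sym2 V), F.card = ℓ ∧ (G.deleteEdges ↑F).Colorable k := by
  obtain ⟨-, hχ, hes⟩ := hG
  have hne := Nat.nonempty_of_pos_sInf (hes ▸ Nat.pos_of_ne_zero hℓ : 0 < esChi G)
  obtain ⟨F, -, hF, hχF⟩ := Nat.sInf_mem hne
  refine ⟨F, hF.trans hes, chromaticNumber_le_iff_colorable.mp (le_of_eq ?_)⟩
  rw [hχ] at hχF
  push_cast at hχF
  exact ENat.add_left_injective_of_ne_top ENat.one_ne_top hχF

theorem IsOddCycleSubgraph.exists_cons {H : G.Subgraph} (hH : IsOddCycleSubgraph G H) {a b : V}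
    (hab : s(a, b) ∈ H.edgeSet) : ∃ (h : G.Adj a b) (p : G.Walk b a),
      (Walk.cons h p).IsCycle ∧ (Walk.cons h p).toSubgraph = H := by
  obtain ⟨u, w, hw, -, rfl⟩ := hH
  exact hw.exists_cons_of_mem_edges ((Walk.mem_edges_toSubgraph w).mp hab)

theorem IsOddCycleSubgraph.exists_isDiag_iff_eq {F : Finset (Sym2 V)} (hF : F.card ≤ 2)
    {c : V → Bool} (hmono : ∀ e ∈ G.edgeSet, (e.map c).IsDiag → e ∈ F) {H : G.Subgraph}
    (hH : IsOddCycleSubgraph G H) : ∃ m, ∀ e, e ∈ H.edgeSet ∧ (e.map c).IsDiag ↔ e = m := by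
  classical
  obtain ⟨u, w, hw, hodd, rfl⟩ := hH
  set L := w.edges.filter (fun e => (e.map c).IsDiag)
  have hL : L.Nodup := hw.edges_nodup.filter _
  have hmemL : ∀ e, e ∈ L ↔ e ∈ w.edges ∧ (e.map c).IsDiag := by simp [L]
  have hlen_le : L.length ≤ 2 := by
    rw [← List.toFinset_card_of_nodup hL]
    refine (Finset.card_le_card fun e he => ?_).trans hF
    rw [List.mem_toFinset, hmemL] at he
    exact hmono e (w.edges_subset_edgeSet he.1) he.2
  have hlen_odd : Odd L.length := by
    have := (w.even_length_add_countP_isDiag_iff c).mpr rfl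
    rw [List.countP_eq_length_filter, Nat.even_add] at this
    exact Nat.not_even_iff_odd.mp (this.not.mp (Nat.not_even_iff_odd.mpr hodd))
  have hlen : L.length = 1 := by
    obtain ⟨k, hk⟩ := hlen_odd
    omega
  obtain ⟨m, hm⟩ := List.length_eq_one_iff.mp hlen
  refine ⟨m, fun e => ?_⟩
  rw [Walk.mem_edges_toSubgraph, ← hmemL, hm, List.mem_singleton]

theorem odd_length_cons_of_forall_not_isDiag {c : V → Bool} {a b : V} (h : G.Adj a b)
    (hab : c a = c b) {p : G.Walk b a} (hp : ∀ e ∈ p.edges, ¬ (e.map c).IsDiag) :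
    Odd (Walk.cons h p).length := by
  have := (p.even_length_add_countP_isDiag_iff c).mpr hab.symm
  rw [List.countP_eq_zero.mpr (by simpa using hp), add_zero] at this
  exact this.add_one

theorem exists_isOddCycleSubgraph_inf_isPathSubgraph {c : V → Bool} {m : Sym2 V}
    {H₁ H₂ : G.Subgraph} (h₁ : IsOddCycleSubgraph G H₁) (h₂ : IsOddCycleSubgraph G H₂)
    (hne : H₁ ≠ H₂) (hm₁ : ∀ e, e ∈ H₁.edgeSet ∧ (e.map c).IsDiag ↔ e = m)
    (hm₂ : ∀ e, e ∈ H₂.edgeSet ∧ (e.map c).IsDiag ↔ e = m) :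
    ∃ H₁ H₂ : G.Subgraph, IsOddCycleSubgraph G H₁ ∧ IsOddCycleSubgraph G H₂ ∧ H₁ ≠ H₂ ∧
      IsPathSubgraph G (H₁ ⊓ H₂) ∧ (H₁ ⊓ H₂).edgeSet.Nonempty := by
  induction m using Sym2.ind with | _ a b =>
  obtain ⟨hab₁, hmono⟩ := (hm₁ _).mpr rfl
  obtain ⟨h, p, hp, rfl⟩ := h₁.exists_cons hab₁
  obtain ⟨h', q, hq, rfl⟩ := h₂.exists_cons ((hm₂ _).mpr rfl).1
  have hclean : ∀ {H : G.Subgraph}, (∀ e, e ∈ H.edgeSet ∧ (e.map c).IsDiag ↔ e = s(a, b)) →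
      ∀ r : G.Walk b a, (Walk.cons h r).IsCycle → (Walk.cons h r).toSubgraph = H →
      ∀ e ∈ r.edges, ¬ (e.map c).IsDiag := by
    rintro H hH r hr rfl e he hd
    have := (hH e).mp ⟨(Walk.mem_edges_toSubgraph _).mpr (List.mem_cons_of_mem _ he), hd⟩
    exact ((Walk.cons_isCycle_iff r h).mp hr).2 (this ▸ he)
  obtain ⟨p', hp', hedges, hne', hpath⟩ :=
    hp.exists_isCycle_cons_inf_isPathSubgraph h hq (fun hpq => hne (by rw [hpq]))
  have hodd := odd_length_cons_of_forall_not_isDiag h (Sym2.mk_isDiag_iff.mp hmono) fun e he =>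
    (hedges e he).elim (hclean hm₁ p hp rfl e) (hclean hm₂ q hq rfl e)
  refine ⟨_, _, ⟨a, _, hp', hodd, rfl⟩, h₂, hne', hpath, s(a, b), ?_⟩
  simp [Subgraph.edgeSet_inf]

end OddCycles

theorem exists_path_intersection_general {V : Type} (G : SimpleGraph V)
    (hcrit : IsKLCritical G 3 2)
    (hcyc : 3 ≤ {H : G.Subgraph | IsOddCycleSubgraph G H}.ncard) :
    ∃ H₁ H₂ : G.Subgraph, IsOddCycleSubgraph G H₁ ∧ IsOddCycleSubgraph G H₂ ∧ H₁ ≠ H₂ ∧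
      IsPathSubgraph G (H₁ ⊓ H₂) ∧ (H₁ ⊓ H₂).edgeSet.Nonempty := by
  obtain ⟨F, hF, hcol⟩ := hcrit.exists_colorable_deleteEdges two_ne_zero
  let C := (G.deleteEdges ↑F).recolorOfEquiv finTwoEquiv hcol.some
  have hmono : ∀ e ∈ G.edgeSet, (e.map C).IsDiag → e ∈ F := fun _ => C.mem_of_isDiag_map
  obtain ⟨e₀, -⟩ : F.Nonempty := Finset.card_pos.mp (by omega)
  have : Nonempty (Sym2 V) := ⟨e₀⟩
  choose! μ hμ using fun H (hH : IsOddCycleSubgraph G H) => hH.exists_isDiag_iff_eq hF.le hmono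
  have hμF : ∀ H ∈ {H | IsOddCycleSubgraph G H}, μ H ∈ (F : Set (Sym2 V)) := fun H hH =>
    hmono _ (H.edgeSet_subset ((hμ H hH _).mpr rfl).1) ((hμ H hH _).mpr rfl).2
  obtain ⟨H₁, h₁, H₂, h₂, hne, hμ₁₂⟩ :=
    Set.exists_ne_map_eq_of_ncard_lt_of_maps_to (by rw [Set.ncard_coe_finset, hF]; omega) hμF
  exact exists_isOddCycleSubgraph_inf_isPathSubgraph h₁ h₂ hne (hμ H₁ h₁) (hμ₁₂ ▸ hμ H₂ h₂)

/-- Lemma 2.5: if `G` is `(3,2)`-critical with at least three odd cycles, then some two odd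
cycles intersect in a path with at least one edge. -/
theorem exists_path_intersection {V : Type} [Fintype V] (G : SimpleGraph V)
    (hcrit : IsKLCritical G 3 2)
    (hcyc : 3 ≤ {H : G.Subgraph | IsOddCycleSubgraph G H}.ncard) :
    ∃ H₁ H₂ : G.Subgraph, IsOddCycleSubgraph G H₁ ∧ IsOddCycleSubgraph G H₂ ∧ H₁ ≠ H₂ ∧
      IsPathSubgraph G (H₁ ⊓ H₂) ∧ (H₁ ⊓ H₂).edgeSet.Nonempty :=
  exists_path_intersection_general G hcrit hcyc
end

section
/- Let $k\ge 3$, let $G$ be a graph, and let $u\in V(G)$. Let $G_u\bowtie K_k$ be the graph obtained from the disjoint union of $G$ and the complete graph $K_k$ by identifying $u$ with one vertex of $K_k$. Then $G$ is a $k$-chromatic graph critical for the chromatic number (i.e., $\chi(G)=k$ and $\chi(G-e)=k-1$ for every edge $e$ of $G$) if and only if $G_u\bowtie K_k$ is $(k,2)$-critical. -/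
/-!
The graphs `G` and `K_k` share only the vertex `u` in `G_u ⋈ K_k`, so colourings of the two sides
glue together once their colours are permuted to agree at `u`; hence the bowtie has chromatic
number `k` when `χ(G) ≤ k`. If `χ(G) = k`, deleting a single edge leaves a side of chromatic
number `k` intact, while deleting an edge `e` of `G` together with an edge of the clique leaves
chromatic number `χ(G - e)` whenever `χ(G - e) ≥ k - 1`. So criticality of `G` gives `esχ = 2`,
and after any one deletion a single edge from the other side of `u` suffices. Conversely,
`esχ = 2` forces `χ(G) = k`, and after deleting an edge `e` of `G` the one further edge that
lowers `χ` must lie in the clique, which shows `χ(G - e) = k - 1`.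
-/

open SimpleGraph

/-- `G_u ⋈ K_k`: the graph obtained from the disjoint union of `G` and the complete graph
`K_k` by identifying the vertex `u` of `G` with one vertex of `K_k`; the `k - 1` remaining
clique vertices are the `Sum.inr` vertices. -/
def bowtieClique {V : Type} (G : SimpleGraph V) (u : V) (k : ℕ) :
    SimpleGraph (V ⊕ Fin (k - 1)) where
  Adj x y :=
    match x, y with
    | Sum.inl a, Sum.inl b => G.Adj a b
    | Sum.inl a, Sum.inr _ => a = u
    | Sum.inr _, Sum.inl b => b = u
    | Sum.inr i, Sum.inr j => i ≠ j
  symm := by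
    constructor
    rintro (a | i) (b | j) h
    · exact G.adj_symm h
    · exact h
    · exact h
    · exact Ne.symm h
  loopless := by
    constructor
    rintro (a | i) h
    · exact G.loopless.irrefl a h
    · exact h rfl

namespace SimpleGraph

variable {W : Type*} {H : SimpleGraph W}

theorem Colorable.succ_of_deleteEdges_singleton {n : ℕ} {e : Sym2 W}
    (h : (H.deleteEdges {e}).Colorable n) : H.Colorable (n + 1) := by
  classical
  induction e using Sym2.ind with
  | _ a b =>
  obtain ⟨c⟩ := h
  let C : H.Coloring (Option (Fin n)) :=
    Coloring.mk (fun v => if v = a then none else some (c v)) fun {v w} hvw hcol => by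
      by_cases hv : v = a <;> by_cases hw : w = a
      · exact H.ne_of_adj hvw (hv.trans hw.symm)
      · simp [hv, hw] at hcol
      · simp [hv, hw] at hcol
      · simp only [hv, hw, if_false, Option.some.injEq] at hcol
        refine c.valid ?_ hcol
        rw [deleteEdges_adj, Set.mem_singleton_iff, Sym2.eq_iff]
        exact ⟨hvw, by tauto⟩
  simpa using C.colorable

theorem chromaticNumber_le_deleteEdges_singleton_add_one (e : Sym2 W) :
    H.chromaticNumber ≤ (H.deleteEdges {e}).chromaticNumber + 1 := by
  rcases eq_or_ne (H.deleteEdges {e}).chromaticNumber ⊤ with h | h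
  · simp [h]
  · obtain ⟨n, hn⟩ := ENat.ne_top_iff_exists.1 h
    have : (H.deleteEdges {e}).Colorable n := chromaticNumber_le_iff_colorable.1 hn.ge
    rw [← hn]
    exact_mod_cast this.succ_of_deleteEdges_singleton.chromaticNumber_le

theorem chromaticNumber_ne_top_of_finite [Finite W] (H : SimpleGraph W) :
    H.chromaticNumber ≠ ⊤ :=
  have := Fintype.ofFinite W
  chromaticNumber_ne_top_iff_exists.2 ⟨_, H.colorable_of_fintype⟩

theorem Coloring.exists_apply_eq {α : Type*} [DecidableEq α] (C : H.Coloring α) (w : W)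
    (a : α) :
    ∃ C' : H.Coloring α, C' w = a :=
  ⟨H.recolorOfEquiv (Equiv.swap (C w) a) C, by simp⟩

theorem colorable_top_deleteEdges_singleton [Fintype W] {x y : W} (hxy : x ≠ y) :
    ((⊤ : SimpleGraph W).deleteEdges {s(x, y)}).Colorable (Fintype.card W - 1) := by
  classical
  let C : ((⊤ : SimpleGraph W).deleteEdges {s(x, y)}).Coloring {w // w ≠ y} :=
    Coloring.mk (fun v => if h : v = y then ⟨x, hxy⟩ else ⟨v, h⟩) fun {v w} hvw hcol => by
      rw [deleteEdges_adj, top_adj, Set.mem_singleton_iff, Sym2.eq_iff] at hvw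
      obtain ⟨hne, hxy'⟩ := hvw
      by_cases hv : v = y <;> by_cases hw : w = y <;>
        simp only [hv, hw, dite_true, dite_false, Subtype.mk.injEq] at hcol <;> grind
  simpa [Fintype.card_subtype_compl] using C.colorable

end SimpleGraph

open SimpleGraph

section EdgeStability

variable {W : Type} {H : SimpleGraph W}

theorem esChi_le_card {F : Finset (Sym2 W)} (hF : ↑F ⊆ H.edgeSet)
    (h : (H.deleteEdges ↑F).chromaticNumber + 1 = H.chromaticNumber) : esChi H ≤ F.card :=
  Nat.sInf_le ⟨F, hF, rfl, h⟩

theorem exists_deleteEdges_chromaticNumber_add_one_eq [Finite W] (h : 1 < H.chromaticNumber) :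
    ∃ F : Finset (Sym2 W), ↑F ⊆ H.edgeSet ∧
      (H.deleteEdges ↑F).chromaticNumber + 1 = H.chromaticNumber := by
  classical
  have := Fintype.ofFinite W
  -- an inclusion-minimal set of edges whose deletion lowers `χ` lowers it by exactly one
  obtain ⟨F, hFE, hFlt, hFmin⟩ := exists_minimal_le_of_wellFoundedLT
    (fun F : Finset (Sym2 W) => (H.deleteEdges ↑F).chromaticNumber < H.chromaticNumber)
    H.edgeFinset (by
      rw [coe_edgeFinset, deleteEdges_edgeSet, sdiff_self]
      exact lt_of_le_of_lt (colorable_one_iff.2 rfl).chromaticNumber_le (by exact_mod_cast h))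
  refine ⟨F, by simpa using Finset.coe_subset.2 hFE, le_antisymm ?_ ?_⟩
  · exact Order.add_one_le_of_lt hFlt
  · obtain ⟨e, he⟩ : F.Nonempty := Finset.nonempty_iff_ne_empty.2 fun hF => by
      simp [hF] at hFlt
    have hle : H.chromaticNumber ≤ (H.deleteEdges ↑(F.erase e)).chromaticNumber :=
      not_lt.1 fun hlt => (Finset.erase_ssubset he).not_ge (hFmin hlt (Finset.erase_subset e F))
    calc H.chromaticNumber ≤ (H.deleteEdges ↑(F.erase e)).chromaticNumber := hle
      _ ≤ ((H.deleteEdges ↑(F.erase e)).deleteEdges {e}).chromaticNumber + 1 :=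
        chromaticNumber_le_deleteEdges_singleton_add_one e
      _ = (H.deleteEdges ↑F).chromaticNumber + 1 := by
        rw [deleteEdges_deleteEdges, Finset.coe_erase, Set.sdiff_union_self,
          Set.union_singleton, Set.insert_eq_of_mem (Finset.mem_coe.2 he)]

theorem esChi_le_one_iff [Finite W] (h : 1 < H.chromaticNumber) :
    esChi H ≤ 1 ↔
      ∃ e ∈ H.edgeSet, (H.deleteEdges {e}).chromaticNumber + 1 = H.chromaticNumber := by
  constructor
  · intro hle
    obtain ⟨F₀, hF₀⟩ := exists_deleteEdges_chromaticNumber_add_one_eq h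
    obtain ⟨F, hFE, hcard, hF⟩ := Nat.sInf_mem (⟨F₀.card, F₀, hF₀.1, rfl, hF₀.2⟩ :
      {n : ℕ | ∃ F : Finset (Sym2 W), ↑F ⊆ H.edgeSet ∧ F.card = n ∧
        (H.deleteEdges ↑F).chromaticNumber + 1 = H.chromaticNumber}.Nonempty)
    change F.card = esChi H at hcard
    rcases Nat.le_one_iff_eq_zero_or_eq_one.1 (hcard ▸ hle) with h0 | h1
    · rw [Finset.card_eq_zero.1 h0, Finset.coe_empty, deleteEdges_empty] at hF
      exact absurd hF ((ENat.lt_add_one_iff (chromaticNumber_ne_top_of_finite H)).2 le_rfl).ne'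
    · obtain ⟨e, rfl⟩ := Finset.card_eq_one.1 h1
      exact ⟨e, by simpa using hFE, by simpa using hF⟩
  · rintro ⟨e, he, hdrop⟩
    simpa using esChi_le_card (F := {e}) (by simpa using he) (by simpa using hdrop)

theorem chromaticNumber_deleteEdges_singleton_eq_of_one_lt_esChi [Finite W]
    (h : 1 < H.chromaticNumber) (hes : 1 < esChi H) {e : Sym2 W} (he : e ∈ H.edgeSet) :
    (H.deleteEdges {e}).chromaticNumber = H.chromaticNumber := by
  refine le_antisymm (chromaticNumber_mono _ (deleteEdges_le _)) ?_
  refine (ENat.lt_add_one_iff (chromaticNumber_ne_top_of_finite _)).1 <|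
    (chromaticNumber_le_deleteEdges_singleton_add_one e).lt_of_ne fun hdrop => ?_
  exact hes.not_ge ((esChi_le_one_iff h).2 ⟨e, he, hdrop.symm⟩)

end EdgeStability

section Bowtie

open Sum

variable {V : Type} {G : SimpleGraph V} {u : V} {k : ℕ}

/-- The vertices of the copy of `K_k` in `bowtieClique G u k`, with `none` the shared vertex `u`. -/
def cliqueVertex (u : V) (k : ℕ) (x : Option (Fin (k - 1))) : V ⊕ Fin (k - 1) :=
  x.elim (inl u) inr

@[simp] theorem bowtieClique_adj_cliqueVertex {x y : Option (Fin (k - 1))} :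
    (bowtieClique G u k).Adj (cliqueVertex u k x) (cliqueVertex u k y) ↔ x ≠ y := by
  cases x <;> cases y <;> simp [cliqueVertex, bowtieClique]

theorem map_inl_ne_cliqueEdge (e : Sym2 V) {x y : Option (Fin (k - 1))} (hxy : x ≠ y) :
    e.map inl ≠ s(cliqueVertex u k x, cliqueVertex u k y) := by
  induction e using Sym2.ind with
  | _ a b => cases x <;> cases y <;> simp_all [cliqueVertex]

theorem mem_edgeSet_bowtieClique {e : Sym2 (V ⊕ Fin (k - 1))} :
    e ∈ (bowtieClique G u k).edgeSet ↔ (∃ e₀ ∈ G.edgeSet, e₀.map inl = e) ∨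
      ∃ x y : Option (Fin (k - 1)), x ≠ y ∧
        s(cliqueVertex u k x, cliqueVertex u k y) = e := by
  constructor
  · induction e using Sym2.ind with
    | _ v w =>
    intro h
    rcases v with a | i <;> rcases w with b | j
    · exact Or.inl ⟨s(a, b), h, rfl⟩
    · exact Or.inr ⟨none, some j, by simp, by rw [show a = u from h]; rfl⟩
    · exact Or.inr ⟨some i, none, by simp, by rw [show b = u from h]; rfl⟩
    · exact Or.inr ⟨some i, some j, (Option.some_injective _).ne h, rfl⟩
  · rintro (⟨e₀, he₀, rfl⟩ | ⟨x, y, hxy, rfl⟩)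
    · induction e₀ using Sym2.ind with
      | _ a b => exact he₀
    · exact bowtieClique_adj_cliqueVertex.2 hxy

theorem colorable_bowtieClique_deleteEdges_of_coloring {n : ℕ}
    {F : Set (Sym2 (V ⊕ Fin (k - 1)))} {S : Set (Sym2 V)} {T : Set (Sym2 (Option (Fin (k - 1))))}
    (hS : S ⊆ Sym2.map inl ⁻¹' F) (hT : T ⊆ Sym2.map (cliqueVertex u k) ⁻¹' F)
    (c : (G.deleteEdges S).Coloring (Fin n))
    (φ : ((⊤ : SimpleGraph (Option (Fin (k - 1)))).deleteEdges T).Coloring (Fin n))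
    (hu : φ none = c u) :
    ((bowtieClique G u k).deleteEdges F).Colorable n := by
  refine ⟨Coloring.mk (Sum.elim c (φ ∘ some)) ?_⟩
  rintro (a | i) (b | j) hadj <;> rw [deleteEdges_adj] at hadj <;> obtain ⟨hadj, hF⟩ := hadj
  · exact c.valid ((deleteEdges_adj ..).2 ⟨hadj, fun h => hF (hS h)⟩)
  · obtain rfl : a = u := hadj
    simpa [← hu] using φ.valid ((deleteEdges_adj ..).2 ⟨Option.some_ne_none j |>.symm,
      fun h => hF (hT h)⟩)
  · obtain rfl : b = u := hadj
    simpa [← hu] using φ.valid ((deleteEdges_adj ..).2 ⟨Option.some_ne_none i,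
      fun h => hF (hT h)⟩)
  · exact φ.valid ((deleteEdges_adj ..).2
      ⟨(Option.some_injective _).ne hadj, fun h => hF (hT h)⟩)

theorem colorable_bowtieClique (hk : k ≠ 0) {n : ℕ} (hn : k ≤ n) (h : G.Colorable n) :
    (bowtieClique G u k).Colorable n := by
  classical
  rw [← deleteEdges_empty (G := G)] at h
  obtain ⟨c⟩ := h
  have hK : ((⊤ : SimpleGraph (Option (Fin (k - 1)))).deleteEdges ∅).Colorable n := by
    rw [deleteEdges_empty]
    exact (colorable_of_fintype _).mono (by simp; omega)
  obtain ⟨φ, hφ⟩ := hK.some.exists_apply_eq none (c u)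
  rw [← deleteEdges_empty (G := bowtieClique G u k)]
  exact colorable_bowtieClique_deleteEdges_of_coloring (Set.empty_subset _) (Set.empty_subset _)
    c φ hφ

theorem colorable_bowtieClique_deleteEdges_of_cliqueEdge_mem {n : ℕ}
    {F : Set (Sym2 (V ⊕ Fin (k - 1)))} {S : Set (Sym2 V)} (hS : S ⊆ Sym2.map inl ⁻¹' F)
    {x y : Option (Fin (k - 1))} (hxy : x ≠ y)
    (hF : s(cliqueVertex u k x, cliqueVertex u k y) ∈ F) (hn : k ≤ n + 1)
    (h : (G.deleteEdges S).Colorable n) : ((bowtieClique G u k).deleteEdges F).Colorable n := by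
  classical
  obtain ⟨c⟩ := h
  have hK := (colorable_top_deleteEdges_singleton hxy).mono (by simp; omega : _ ≤ n)
  obtain ⟨φ, hφ⟩ := hK.some.exists_apply_eq none (c u)
  exact colorable_bowtieClique_deleteEdges_of_coloring hS
    (Set.singleton_subset_iff.2 hF) c φ hφ

theorem le_chromaticNumber_bowtieClique_deleteEdges {F : Set (Sym2 (V ⊕ Fin (k - 1)))}
    (hF : ∀ x y, x ≠ y → s(cliqueVertex u k x, cliqueVertex u k y) ∉ F) :
    (k : ℕ∞) ≤ ((bowtieClique G u k).deleteEdges F).chromaticNumber :=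
  le_chromaticNumber_of_pairwise_adj (by simp; omega) (cliqueVertex u k) fun x y hxy =>
    (deleteEdges_adj ..).2 ⟨bowtieClique_adj_cliqueVertex.2 hxy, hF x y hxy⟩

theorem chromaticNumber_deleteEdges_le_bowtieClique_deleteEdges {S : Set (Sym2 V)}
    {F : Set (Sym2 (V ⊕ Fin (k - 1)))} (hS : Sym2.map inl ⁻¹' F ⊆ S) :
    (G.deleteEdges S).chromaticNumber ≤ ((bowtieClique G u k).deleteEdges F).chromaticNumber :=
  chromaticNumber_mono_of_hom
    ⟨inl, fun {a b} hab => by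
      rw [deleteEdges_adj] at hab ⊢
      exact ⟨hab.1, fun h => hab.2 (hS h)⟩⟩

theorem chromaticNumber_bowtieClique (hk : k ≠ 0) (h : G.Colorable k) :
    (bowtieClique G u k).chromaticNumber = k := by
  refine le_antisymm (colorable_bowtieClique hk le_rfl h).chromaticNumber_le ?_
  simpa [deleteEdges_empty] using
    le_chromaticNumber_bowtieClique_deleteEdges (G := G) (u := u) (F := ∅) fun _ _ _ => id

theorem chromaticNumber_bowtieClique_deleteEdges_pair [Finite V] (e : Sym2 V)
    {x y : Option (Fin (k - 1))} (hxy : x ≠ y)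
    (hk : k ≤ (G.deleteEdges {e}).chromaticNumber + 1) :
    ((bowtieClique G u k).deleteEdges {e.map inl, s(cliqueVertex u k x, cliqueVertex u k y)}
      ).chromaticNumber = (G.deleteEdges {e}).chromaticNumber := by
  obtain ⟨n, hn⟩ :=
    ENat.ne_top_iff_exists.1 (chromaticNumber_ne_top_of_finite (G.deleteEdges {e}))
  refine le_antisymm ?_ (chromaticNumber_deleteEdges_le_bowtieClique_deleteEdges ?_)
  · rw [← hn]
    refine (colorable_bowtieClique_deleteEdges_of_cliqueEdge_mem (by simp) hxy (by simp) ?_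
      (chromaticNumber_le_iff_colorable.1 hn.ge)).chromaticNumber_le
    exact_mod_cast hn ▸ hk
  · rintro e' (he' | he')
    · exact Sym2.map.injective inl_injective he'
    · exact absurd he' (map_inl_ne_cliqueEdge e' hxy)

theorem chromaticNumber_bowtieClique_deleteEdges_singleton (hk : k ≠ 0)
    (hG : G.chromaticNumber = k) {f : Sym2 (V ⊕ Fin (k - 1))}
    (hf : f ∈ (bowtieClique G u k).edgeSet) :
    ((bowtieClique G u k).deleteEdges {f}).chromaticNumber = k := by
  have hB := chromaticNumber_bowtieClique (u := u) hk (chromaticNumber_le_iff_colorable.1 hG.le)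
  refine le_antisymm (hB ▸ chromaticNumber_mono _ (deleteEdges_le _)) ?_
  rcases mem_edgeSet_bowtieClique.1 hf with ⟨e, -, rfl⟩ | ⟨x, y, hxy, rfl⟩
  · exact le_chromaticNumber_bowtieClique_deleteEdges fun x y hxy h =>
      map_inl_ne_cliqueEdge e hxy (Set.mem_singleton_iff.1 h).symm
  · calc (k : ℕ∞) = (G.deleteEdges ∅).chromaticNumber := by rw [deleteEdges_empty, hG]
      _ ≤ _ := chromaticNumber_deleteEdges_le_bowtieClique_deleteEdges
        fun e he => map_inl_ne_cliqueEdge e hxy (Set.mem_singleton_iff.1 he)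

theorem esChi_bowtieClique [Finite V] (hk : 2 ≤ k) (hG : G.chromaticNumber = k)
    (hcrit : ∀ e ∈ G.edgeSet, (G.deleteEdges {e}).chromaticNumber + 1 = k) :
    esChi (bowtieClique G u k) = 2 := by
  classical
  have hB := chromaticNumber_bowtieClique (u := u) (by omega)
    (chromaticNumber_le_iff_colorable.1 hG.le)
  obtain ⟨e, he⟩ : G.edgeSet.Nonempty :=
    edgeSet_nonempty.2 (two_le_chromaticNumber_iff_ne_bot.1 (hG ▸ by exact_mod_cast hk))
  have hxy : (none : Option (Fin (k - 1))) ≠ some ⟨0, by omega⟩ := by simp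
  refine le_antisymm ?_ (not_lt.1 fun hlt => ?_)
  · have hne := map_inl_ne_cliqueEdge (u := u) e hxy
    refine (esChi_le_card (F := {(e.map inl : Sym2 (V ⊕ Fin (k - 1))),
      s(cliqueVertex u k none, cliqueVertex u k _)})
      ?_ ?_).trans_eq (Finset.card_pair hne)
    · rw [Finset.coe_pair, Set.insert_subset_iff, Set.singleton_subset_iff]
      exact ⟨mem_edgeSet_bowtieClique.2 (.inl ⟨e, he, rfl⟩),
        mem_edgeSet_bowtieClique.2 (.inr ⟨_, _, hxy, rfl⟩)⟩
    · rw [Finset.coe_pair, chromaticNumber_bowtieClique_deleteEdges_pair e hxy (hcrit e he).ge,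
        hcrit e he, hB]
  · obtain ⟨f, hf, hdrop⟩ := (esChi_le_one_iff (by rw [hB]; exact_mod_cast hk)).1
      (Nat.lt_succ_iff.1 hlt)
    rw [chromaticNumber_bowtieClique_deleteEdges_singleton (by omega) hG hf, hB] at hdrop
    exact absurd hdrop (by norm_cast; omega)

theorem edgeStabilityCritical_bowtieClique [Finite V] (hk : 2 ≤ k) (hG : G.chromaticNumber = k)
    (hcrit : ∀ e ∈ G.edgeSet, (G.deleteEdges {e}).chromaticNumber + 1 = k) :
    EdgeStabilityCritical (bowtieClique G u k) := by
  intro f hf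
  have hBf := chromaticNumber_bowtieClique_deleteEdges_singleton (by omega) hG hf
  rw [esChi_bowtieClique hk hG hcrit, Nat.lt_succ_iff,
    esChi_le_one_iff (by rw [hBf]; exact_mod_cast hk), hBf]
  have hxy : (none : Option (Fin (k - 1))) ≠ some ⟨0, by omega⟩ := by simp
  simp only [edgeSet_deleteEdges, deleteEdges_deleteEdges, Set.singleton_union]
  -- delete one more edge, from the other side of `u` than `f`
  rcases mem_edgeSet_bowtieClique.1 hf with ⟨e, he, rfl⟩ | ⟨x, y, hxy', rfl⟩
  · refine ⟨_, ⟨mem_edgeSet_bowtieClique.2 (.inr ⟨_, _, hxy, rfl⟩),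
      (map_inl_ne_cliqueEdge e hxy).symm⟩, ?_⟩
    rw [chromaticNumber_bowtieClique_deleteEdges_pair e hxy (hcrit e he).ge, hcrit e he]
  · obtain ⟨e, he⟩ : G.edgeSet.Nonempty :=
      edgeSet_nonempty.2 (two_le_chromaticNumber_iff_ne_bot.1 (hG ▸ by exact_mod_cast hk))
    refine ⟨e.map inl, ⟨mem_edgeSet_bowtieClique.2 (.inl ⟨e, he, rfl⟩),
      map_inl_ne_cliqueEdge e hxy'⟩, ?_⟩
    rw [Set.pair_comm, chromaticNumber_bowtieClique_deleteEdges_pair e hxy' (hcrit e he).ge,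
      hcrit e he]

theorem chromaticNumber_eq_of_isKLCritical_bowtieClique [Finite V] (hk : 2 ≤ k)
    (h : IsKLCritical (bowtieClique G u k) k 2) : G.chromaticNumber = k := by
  obtain ⟨-, hB, hes⟩ := h
  have hxy : (none : Option (Fin (k - 1))) ≠ some ⟨0, by omega⟩ := by simp
  have hf := mem_edgeSet_bowtieClique (G := G) (u := u).2 (.inr ⟨_, _, hxy, rfl⟩)
  refine le_antisymm ?_ (le_chromaticNumber_iff_colorable.2 fun m hm => not_lt.1 fun hm' => ?_)
  · calc G.chromaticNumber = (G.deleteEdges ∅).chromaticNumber := by rw [deleteEdges_empty]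
      _ ≤ ((bowtieClique G u k).deleteEdges ∅).chromaticNumber :=
        chromaticNumber_deleteEdges_le_bowtieClique_deleteEdges (by simp)
      _ = k := by rw [deleteEdges_empty, hB]
  · -- a `(k - 1)`-colouring of `G` would let a single clique edge lower `χ`, against `esχ = 2`
    have hcol := colorable_bowtieClique_deleteEdges_of_cliqueEdge_mem (u := u) (n := k - 1)
      (S := ∅) (Set.empty_subset _) hxy (Set.mem_singleton _) (by omega)
      (by rw [deleteEdges_empty]; exact hm.mono (by omega))
    have hle := hcol.chromaticNumber_le
    rw [chromaticNumber_deleteEdges_singleton_eq_of_one_lt_esChi (by rw [hB]; exact_mod_cast hk)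
      (by omega) hf, hB] at hle
    exact absurd hle (by norm_cast; omega)

theorem chromaticNumber_deleteEdges_add_one_of_isKLCritical_bowtieClique [Finite V] (hk : 2 ≤ k)
    (h : IsKLCritical (bowtieClique G u k) k 2) {e : Sym2 V} (he : e ∈ G.edgeSet) :
    (G.deleteEdges {e}).chromaticNumber + 1 = k := by
  have hG := chromaticNumber_eq_of_isKLCritical_bowtieClique hk h
  obtain ⟨hcrit, hB, hes⟩ := h
  have hBe : ((bowtieClique G u k).deleteEdges {e.map inl}).chromaticNumber = k :=
    le_antisymm (hB ▸ chromaticNumber_mono _ (deleteEdges_le _))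
      (le_chromaticNumber_bowtieClique_deleteEdges fun x y hxy h =>
        map_inl_ne_cliqueEdge e hxy (Set.mem_singleton_iff.1 h).symm)
  have hlt := hcrit _ (mem_edgeSet_bowtieClique.2 (.inl ⟨e, he, rfl⟩))
  rw [hes, Nat.lt_succ_iff, esChi_le_one_iff (by rw [hBe]; exact_mod_cast hk)] at hlt
  obtain ⟨f, hf, hdrop⟩ := hlt
  rw [hBe, deleteEdges_deleteEdges, Set.singleton_union] at hdrop
  rw [edgeSet_deleteEdges] at hf
  have hGe : (k : ℕ∞) ≤ (G.deleteEdges {e}).chromaticNumber + 1 :=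
    hG ▸ chromaticNumber_le_deleteEdges_singleton_add_one e
  rcases mem_edgeSet_bowtieClique.1 hf.1 with ⟨f, -, rfl⟩ | ⟨x, y, hxy, rfl⟩
  · -- deleting two edges of `G` leaves the clique intact
    have hle := le_chromaticNumber_bowtieClique_deleteEdges (G := G) (u := u)
      (F := ({e.map inl, f.map inl} : Set (Sym2 (V ⊕ Fin (k - 1))))) fun x y hxy h => by
        rcases h with h | h <;> exact map_inl_ne_cliqueEdge _ hxy h.symm
    have : (k : ℕ∞) + 1 ≤ k := hdrop ▸ add_le_add_left hle 1
    exact absurd this (by norm_cast; omega)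
  · rwa [chromaticNumber_bowtieClique_deleteEdges_pair e hxy hGe] at hdrop

end Bowtie

theorem critical_iff_bowtie_critical_general {V : Type} [Fintype V] (G : SimpleGraph V) (u : V)
    (k : ℕ) (hk : 3 ≤ k) :
    (G.chromaticNumber = (k : ℕ∞) ∧
      ∀ e ∈ G.edgeSet, (G.deleteEdges {e}).chromaticNumber + 1 = (k : ℕ∞)) ↔
    IsKLCritical (bowtieClique G u k) k 2 := by
  constructor
  · rintro ⟨hG, hcrit⟩
    exact ⟨edgeStabilityCritical_bowtieClique (by omega) hG hcrit,
      chromaticNumber_bowtieClique (by omega) (chromaticNumber_le_iff_colorable.1 hG.le),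
      esChi_bowtieClique (by omega) hG hcrit⟩
  · intro h
    exact ⟨chromaticNumber_eq_of_isKLCritical_bowtieClique (by omega) h,
      fun _ he => chromaticNumber_deleteEdges_add_one_of_isKLCritical_bowtieClique (by omega) h
        he⟩

/-- Theorem 3.1: for `k ≥ 3`, a graph `G` (without isolated vertices) satisfies `χ(G) = k`
and is critical for the chromatic number if and only if `G_u ⋈ K_k` is `(k,2)`-critical. -/
theorem critical_iff_bowtie_critical {V : Type} [Fintype V] (G : SimpleGraph V) (u : V)
    (k : ℕ) (hk : 3 ≤ k) (hiso : ∀ v : V, ∃ w : V, G.Adj v w) :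
    (G.chromaticNumber = (k : ℕ∞) ∧
      ∀ e ∈ G.edgeSet, (G.deleteEdges {e}).chromaticNumber + 1 = (k : ℕ∞)) ↔
    IsKLCritical (bowtieClique G u k) k 2 :=
  critical_iff_bowtie_critical_general G u k hk
end
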